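/- arXiv:1806.10786 — 6 statements merged into one kernel-verified Lean document; each statement's English description precedes it below -/
import Mathlib

section
/- Let N be a positive integer, χ* a primitive Dirichlet character modulo c* with (c*,N)=1, and m a positive integer. For Re(s) > 1, the Dirichlet series I^{(N)}(s, χ*, c*, m) = ∑_{ℓ ≥ 1, (ℓ,N)=1} g(χ*, ℓc*, m)·ℓ^{−s}, which is a generating function for the nonprimitive Gauss sums induced from χ*, converges and satisfies the identity τ(χ*)·m^{1−s}·σ^{(N)}_{s−1}(m, conj(χ*))·L^{(N)}(s, χ*)^{−1} = I^{(N)}(s, χ*, c*, m). -/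
/-!
Writing `v < ℓ c*` as `v = d u` with `d = gcd(v, ℓ)` turns the complete sum
`∑_{v mod ℓc*} e(mv/(ℓc*)) χ*(v)` into the Dirichlet convolution `∑_{ab=ℓ} χ*(a) g(χ*, bc*, m)`.
Writing instead `v = c* t + w`, the complete sum factors through `∑_{t < ℓ} e(mt/ℓ)`, so it
vanishes unless `ℓ ∣ m`, and then equals `ℓ ∑_{w mod c*} e((m/ℓ)w/c*) χ*(w) = ℓ χ̄*(m/ℓ) τ(χ*)`
by primitivity. Cutting all coefficients down to `ℓ` coprime to `N` respects Dirichlet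
convolution, because the cut-off is completely multiplicative, so taking L-series gives
`L^{(N)}(s, χ*) I^{(N)}(s, χ*, c*, m) = τ(χ*) m^{1-s} σ^{(N)}_{s-1}(m, χ̄*)`. Convolving with the
twisted Möbius function `χ* μ`, the inverse of `χ*`, shows that `I^{(N)}` converges and that
`L^{(N)}(s, χ*) ≠ 0`.
-/

open Complex
open scoped Classical

noncomputable section

/-- `e x = exp(2 π i x)`. -/
def e (x : ℝ) : ℂ := Complex.exp (2 * Real.pi * Complex.I * x)

/-- The standard additive character of `ZMod c`. -/
def eZMod (c : ℕ) (x : ZMod c) : ℂ :=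
  Complex.exp (2 * Real.pi * Complex.I * (x.val : ℝ) / (c : ℝ))

/-- The classical Kloosterman sum `S(a, b; c)`. -/
def kloosterman (a b : ℤ) (c : ℕ) : ℂ :=
  if h : c = 0 then 0 else
    haveI : NeZero c := ⟨h⟩
    ∑ d : (ZMod c)ˣ,
      eZMod c ((a : ZMod c) * (d : ZMod c) + (b : ZMod c) * ((d⁻¹ : (ZMod c)ˣ) : ZMod c))

/-- The Gauss sum `g(χ, c, m) = ∑_{u mod c, (u,c)=1} e(um/c) χ(u)`, for a Dirichlet character
`χ` modulo `n` (intended `n ∣ c`). -/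
def gSum {n : ℕ} (χ : DirichletCharacter ℂ n) (c : ℕ) (m : ℤ) : ℂ :=
  if h : c = 0 then 0 else
    haveI : NeZero c := ⟨h⟩
    ∑ u : (ZMod c)ˣ, eZMod c ((m : ZMod c) * (u : ZMod c)) * χ (((u : ZMod c).val : ZMod n))

/-- The Gauss sum `τ(χ)` of a Dirichlet character modulo `n`. -/
def tau {n : ℕ} (χ : DirichletCharacter ℂ n) : ℂ := gSum χ n 1

/-- The complex conjugate of a Dirichlet character. -/
def conjChar {n : ℕ} (χ : DirichletCharacter ℂ n) : DirichletCharacter ℂ n :=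
  χ.ringHomComp (starRingEnd ℂ)

/-- `L^{(N)}(s,χ) = ∑_{n ≥ 1, (n,N)=1} χ(n) n^{-s}`. -/
def LN (N : ℕ) {n : ℕ} (χ : DirichletCharacter ℂ n) (s : ℂ) : ℂ :=
  ∑' k : ℕ, if Nat.Coprime (k + 1) N then
    χ (((k + 1 : ℕ) : ZMod n)) * ((k + 1 : ℕ) : ℂ) ^ (-s) else 0

/-- `σ^{(N)}_s(m,χ) = ∑_{d ∣ m, (d,N)=1} χ(m/d) (m/d)^s`. -/
def sigmaN (N : ℕ) {n : ℕ} (χ : DirichletCharacter ℂ n) (s : ℂ) (m : ℕ) : ℂ :=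
  ∑ d ∈ m.divisors.filter (fun d => Nat.Coprime d N),
    χ (((m / d : ℕ) : ZMod n)) * ((m / d : ℕ) : ℂ) ^ s

/-- The archimedean factor `G^k(s)`. -/
def Gk (N : ℕ) {M : ℕ} (ψ : DirichletCharacter ℂ M) (ε α β γ : ℂ) (k : ℕ) (s : ℂ) : ℂ :=
  Complex.I ^ k * tau ψ * ε * (N : ℂ) ^ ((1 : ℂ) / 2 - s) * (Real.pi : ℂ) ^ (3 * (s - 1 / 2)) *
    (Complex.Gamma ((1 - s + k - α) / 2) / Complex.Gamma ((s + k + α) / 2)) *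
    (Complex.Gamma ((1 - s + k - β) / 2) / Complex.Gamma ((s + k + β) / 2)) *
    (Complex.Gamma ((1 - s + k - γ) / 2) / Complex.Gamma ((s + k + γ) / 2))

/-- `G₊ = G⁰` if `ψ(-1) = 1` and `G₊ = G¹` otherwise. -/
def Gplus (N : ℕ) {M : ℕ} (ψ : DirichletCharacter ℂ M) (ε α β γ : ℂ) (s : ℂ) : ℂ :=
  if ψ (-1) = 1 then Gk N ψ ε α β γ 0 s else Gk N ψ ε α β γ 1 s

/-- `G₋ = G¹` if `ψ(-1) = 1` and `G₋ = G⁰` otherwise. -/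
def Gminus (N : ℕ) {M : ℕ} (ψ : DirichletCharacter ℂ M) (ε α β γ : ℂ) (s : ℂ) : ℂ :=
  if ψ (-1) = 1 then Gk N ψ ε α β γ 1 s else Gk N ψ ε α β γ 0 s

/-- `G_± = G₊` if `χ(-1) = 1` and `G_± = G₋` if `χ(-1) = -1`. -/
def Gpm (N : ℕ) {M n : ℕ} (ψ : DirichletCharacter ℂ M) (ε α β γ : ℂ)
    (χ : DirichletCharacter ℂ n) (s : ℂ) : ℂ :=
  if χ (-1) = 1 then Gplus N ψ ε α β γ s else Gminus N ψ ε α β γ s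

/-- The right-hand side `∑_{abc=m, b ∣ n₁, c ∣ n₂} A(bn₂/c, an₁/b) ψ(c)` of the Hecke
relation. -/
def heckeRHS2 {M : ℕ} (ψ : DirichletCharacter ℂ M) (A : ℕ → ℕ → ℂ) (m n₁ n₂ : ℕ) : ℂ :=
  ∑ t ∈ (Finset.range (m + 1) ×ˢ Finset.range (m + 1) ×ˢ Finset.range (m + 1)).filter
      (fun t => t.1 * (t.2.1 * t.2.2) = m ∧ t.2.1 ∣ n₁ ∧ t.2.2 ∣ n₂),
    A (t.2.1 * n₂ / t.2.2) (t.1 * n₁ / t.2.1) * ψ ((t.2.2 : ℕ) : ZMod M)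

/-- The right-hand side `∑_{abc=n, a ∣ n₁, b ∣ n₂} ψ(ab) A(cn₂/b, bn₁/a)` of the other Hecke
relation. -/
def heckeRHS1 {M : ℕ} (ψ : DirichletCharacter ℂ M) (A : ℕ → ℕ → ℂ) (n n₁ n₂ : ℕ) : ℂ :=
  ∑ t ∈ (Finset.range (n + 1) ×ˢ Finset.range (n + 1) ×ˢ Finset.range (n + 1)).filter
      (fun t => t.1 * (t.2.1 * t.2.2) = n ∧ t.1 ∣ n₁ ∧ t.2.1 ∣ n₂),
    ψ ((t.1 * t.2.1 : ℕ) : ZMod M) * A (t.2.2 * n₂ / t.2.1) (t.2.1 * n₁ / t.1)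

open Finset

theorem e_add (x y : ℝ) : e (x + y) = e x * e y := by
  simp only [e, ofReal_add, mul_add, Complex.exp_add]

theorem e_intCast (k : ℤ) : e k = 1 := by
  rw [e, ← Complex.exp_int_mul_two_pi_mul_I k]
  push_cast
  ring_nf

theorem e_natCast (k : ℕ) : e k = 1 := by
  exact_mod_cast e_intCast k

theorem e_natCast_mul (t : ℕ) (x : ℝ) : e (t * x) = e x ^ t := by
  rw [e, e, ← Complex.exp_nat_mul]
  push_cast
  ring_nf

theorem e_eq_one_iff (x : ℝ) : e x = 1 ↔ ∃ k : ℤ, x = k := by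
  rw [e, Complex.exp_eq_one_iff]
  refine exists_congr fun k => ?_
  rw [mul_comm (k : ℂ), mul_right_inj' two_pi_I_ne_zero]
  exact_mod_cast Iff.rfl

theorem e_natCast_div_mod (c a : ℕ) (hc : c ≠ 0) : e ((a % c : ℕ) / c) = e (a / c) := by
  conv_rhs => rw [← Nat.mod_add_div a c]
  push_cast
  rw [add_div, mul_div_cancel_left₀ _ (by exact_mod_cast hc), e_add, e_natCast, mul_one]

theorem sum_range_e_mul_div (m n : ℕ) (hn : n ≠ 0) :
    ∑ t ∈ range n, e (m * t / n) = if n ∣ m then (n : ℂ) else 0 := by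
  have hpow (t : ℕ) : e (m * t / n) = e (m / n) ^ t := by
    rw [← e_natCast_mul]
    ring_nf
  simp_rw [hpow]
  split_ifs with hdvd
  · obtain ⟨k, rfl⟩ := hdvd
    have hk : e (n * k / n) = 1 := by
      rw [mul_div_cancel_left₀ _ (by exact_mod_cast hn), e_natCast]
    push_cast
    simp [hk]
  · have hne : e (m / n) ≠ 1 := by
      rw [Ne, e_eq_one_iff]
      rintro ⟨k, hk⟩
      rw [div_eq_iff (by exact_mod_cast hn)] at hk
      exact hdvd (Int.natCast_dvd_natCast.mp ⟨k, by exact_mod_cast hk.trans (mul_comm _ _)⟩)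
    rw [geom_sum_eq hne, ← e_natCast_mul, mul_div_cancel₀ _ (by exact_mod_cast hn), e_natCast,
      sub_self, zero_div]

theorem eZMod_natCast (c : ℕ) [NeZero c] (a : ℕ) : eZMod c a = e (a / c) := by
  rw [← e_natCast_div_mod c a (NeZero.ne c), eZMod, ZMod.val_natCast, e]
  push_cast
  ring_nf

theorem ZMod.stdAddChar_natCast (c : ℕ) [NeZero c] (a : ℕ) :
    ZMod.stdAddChar (a : ZMod c) = e (a / c) := by
  rw [e, ← Int.cast_natCast, ZMod.stdAddChar_coe]
  push_cast
  ring_nf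

theorem Finset.sum_zmod_eq_sum_range {M : Type*} [AddCommMonoid M] {c : ℕ} [NeZero c]
    (F : ZMod c → M) : ∑ a : ZMod c, F a = ∑ i ∈ range c, F i :=
  sum_nbij' ZMod.val (↑) (fun a _ => mem_range.mpr (ZMod.val_lt a)) (fun _ _ => mem_univ _)
    (fun a _ => ZMod.natCast_zmod_val a)
    (fun _ hi => ZMod.val_natCast_of_lt (mem_range.mp hi))
    (fun a _ => by rw [ZMod.natCast_zmod_val])

theorem Finset.sum_units_eq_sum_coprime {M : Type*} [AddCommMonoid M] {c : ℕ} [NeZero c]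
    (F : ZMod c → M) : ∑ u : (ZMod c)ˣ, F u = ∑ i ∈ range c with i.Coprime c, F i := by
  refine sum_bij (fun u _ => (u : ZMod c).val) (fun u _ => ?_) (fun u _ v _ h => ?_)
    (fun i hi => ?_) (fun u _ => by rw [ZMod.natCast_zmod_val])
  · exact mem_filter.mpr ⟨mem_range.mpr (ZMod.val_lt _), ZMod.val_coe_unit_coprime u⟩
  · exact Units.ext (ZMod.val_injective _ h)
  · obtain ⟨hic, hcop⟩ := mem_filter.mp hi
    exact ⟨ZMod.unitOfCoprime i hcop, mem_univ _, by
      rw [ZMod.coe_unitOfCoprime, ZMod.val_natCast_of_lt (mem_range.mp hic)]⟩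

theorem Finset.sum_range_mul_eq_sum_sum {M : Type*} [AddCommMonoid M] (n c : ℕ) (F : ℕ → M) :
    ∑ v ∈ range (n * c), F v = ∑ t ∈ range n, ∑ w ∈ range c, F (c * t + w) := by
  induction n with
  | zero => simp
  | succ n ih => rw [Nat.succ_mul, sum_range_add, ih, sum_range_succ, mul_comm c n]

theorem Finset.sum_range_mul_eq_sum_divisors {M : Type*} [AddCommMonoid M] {n : ℕ} (hn : n ≠ 0)
    (c : ℕ) (F : ℕ → M) :
    ∑ v ∈ range (n * c), F v =
      ∑ d ∈ n.divisors, ∑ u ∈ range (n / d * c) with u.Coprime (n / d), F (d * u) := by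
  rw [← sum_fiberwise_of_maps_to (g := fun v => v.gcd n) (t := n.divisors)
    (fun v _ => Nat.mem_divisors.mpr ⟨Nat.gcd_dvd_right v n, hn⟩)]
  refine sum_congr rfl fun d hd => ?_
  have hdn : d * (n / d) = n := Nat.mul_div_cancel' (Nat.dvd_of_mem_divisors hd)
  have hd0 : 0 < d := Nat.pos_of_mem_divisors hd
  symm
  refine sum_nbij' (d * ·) (· / d) (fun u hu => ?_) (fun v hv => ?_) (fun u _ => ?_)
    (fun v hv => ?_) (fun _ _ => rfl)
  · obtain ⟨hu, hcop⟩ := mem_filter.mp hu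
    refine mem_filter.mpr ⟨mem_range.mpr ?_, ?_⟩
    · calc d * u < d * (n / d * c) := Nat.mul_lt_mul_of_pos_left (mem_range.mp hu) hd0
        _ = n * c := by rw [← mul_assoc, hdn]
    · show (d * u).gcd n = d
      rw [← hdn, Nat.gcd_mul_left, hcop.gcd_eq_one, mul_one]
  · obtain ⟨hv, hgcd⟩ := mem_filter.mp hv
    refine mem_filter.mpr ⟨mem_range.mpr ?_, ?_⟩
    · rw [Nat.div_lt_iff_lt_mul hd0, mul_right_comm, mul_comm _ d, hdn]
      exact mem_range.mp hv
    · rw [← hgcd]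
      exact Nat.coprime_div_gcd_div_gcd (hgcd ▸ hd0)
  · exact Nat.mul_div_cancel_left u hd0
  · obtain ⟨-, hgcd⟩ := mem_filter.mp hv
    exact Nat.mul_div_cancel' (hgcd ▸ Nat.gcd_dvd_left v n)

section GaussSum

variable {cstar : ℕ} (χ : DirichletCharacter ℂ cstar)

theorem DirichletCharacter.sum_filter_coprime_mul_apply (s : Finset ℕ) (f : ℕ → ℂ) :
    ∑ u ∈ s with u.Coprime cstar, f u * χ u = ∑ u ∈ s, f u * χ u := by
  refine sum_filter_of_ne fun u _ hne => ?_
  by_contra hcop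
  exact hne (by rw [χ.map_nonunit (by rwa [ZMod.isUnit_iff_coprime]), mul_zero])

theorem gSum_eq_sum_range {c : ℕ} (hc : c ≠ 0) (m : ℕ) :
    gSum χ c m = ∑ u ∈ range c with u.Coprime c, e (m * u / c) * χ u := by
  have : NeZero c := ⟨hc⟩
  rw [gSum, dif_neg hc,
    sum_units_eq_sum_coprime (fun x : ZMod c => eZMod c ((m : ℤ) * x) * χ (x.val : ZMod cstar))]
  refine sum_congr rfl fun u hu => ?_
  rw [ZMod.val_natCast_of_lt (mem_range.mp (mem_filter.mp hu).1), Int.cast_natCast,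
    ← Nat.cast_mul, eZMod_natCast]
  push_cast
  rfl

theorem gSum_mul_eq_sum_range {k : ℕ} (hk : k ≠ 0) [NeZero cstar] (m : ℕ) :
    gSum χ (k * cstar) m =
      ∑ u ∈ range (k * cstar) with u.Coprime k, e (m * u / (k * cstar)) * χ u := by
  rw [gSum_eq_sum_range χ (mul_ne_zero hk (NeZero.ne cstar))]
  conv_rhs => rw [← χ.sum_filter_coprime_mul_apply, filter_filter]
  push_cast
  exact sum_congr (filter_congr fun u _ => Nat.coprime_mul_iff_right) fun _ _ => rfl

theorem conjChar_apply (a : ZMod cstar) : conjChar χ a = χ⁻¹ a := by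
  rw [← MulChar.star_apply']
  rfl

theorem sum_range_e_mul_apply_eq_gaussSum [NeZero cstar] (a : ℕ) :
    ∑ w ∈ range cstar, e (a * w / cstar) * χ w = gaussSum χ (ZMod.stdAddChar.mulShift a) := by
  rw [gaussSum, sum_zmod_eq_sum_range]
  refine sum_congr rfl fun w _ => ?_
  rw [AddChar.mulShift_apply, mul_comm (χ _), ← Nat.cast_mul (α := ZMod cstar),
    ZMod.stdAddChar_natCast, Nat.cast_mul]

theorem tau_eq_gaussSum [NeZero cstar] : tau χ = gaussSum χ ZMod.stdAddChar := by
  rw [tau, ← Nat.cast_one, gSum_eq_sum_range χ (NeZero.ne cstar), χ.sum_filter_coprime_mul_apply,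
    sum_range_e_mul_apply_eq_gaussSum, Nat.cast_one, AddChar.mulShift_one]

variable {χ} in
theorem sum_range_e_mul_apply_of_isPrimitive [NeZero cstar] (hprim : χ.IsPrimitive) (a : ℕ) :
    ∑ w ∈ range cstar, e (a * w / cstar) * χ w = conjChar χ a * tau χ := by
  rw [sum_range_e_mul_apply_eq_gaussSum, gaussSum_mulShift_of_isPrimitive _ hprim,
    tau_eq_gaussSum, conjChar_apply]

theorem sum_range_mul_e_mul_apply [NeZero cstar] {n : ℕ} (hn : n ≠ 0) (m : ℕ) :
    ∑ v ∈ range (n * cstar), e (m * v / (n * cstar)) * χ v =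
      if n ∣ m then n * ∑ w ∈ range cstar, e ((m / n : ℕ) * w / cstar) * χ w else 0 := by
  have hc : (cstar : ℝ) ≠ 0 := by exact_mod_cast NeZero.ne cstar
  have hn' : (n : ℝ) ≠ 0 := by exact_mod_cast hn
  have hsplit (t w : ℕ) : e (m * (cstar * t + w : ℕ) / (n * cstar)) * χ (cstar * t + w : ℕ) =
      e (m * t / n) * (e (m * w / (n * cstar)) * χ w) := by
    rw [← mul_assoc, ← e_add]
    congr 2
    · push_cast
      field_simp
    · simp
  rw [sum_range_mul_eq_sum_sum]
  simp_rw [hsplit, ← mul_sum, ← sum_mul, sum_range_e_mul_div m n hn]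
  split_ifs with hdvd
  · obtain ⟨k, rfl⟩ := hdvd
    rw [Nat.mul_div_cancel_left k (Nat.pos_of_ne_zero hn)]
    refine congrArg _ (sum_congr rfl fun w _ => ?_)
    push_cast
    field_simp
  · rw [zero_mul]

def inducedGaussSums (m : ℕ) : ArithmeticFunction ℂ :=
  ⟨fun ℓ => gSum χ (ℓ * cstar) m, by simp [gSum]⟩

theorem inducedGaussSums_apply (m ℓ : ℕ) : inducedGaussSums χ m ℓ = gSum χ (ℓ * cstar) m := rfl

def gaussDivisorFn (m : ℕ) : ArithmeticFunction ℂ :=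
  ⟨fun n => if n ∣ m then n * (conjChar χ (m / n : ℕ) * tau χ) else 0, by simp⟩

theorem gaussDivisorFn_apply (m n : ℕ) :
    gaussDivisorFn χ m n = if n ∣ m then n * (conjChar χ (m / n : ℕ) * tau χ) else 0 := rfl

variable {χ} in
theorem toArithmeticFunction_mul_inducedGaussSums [NeZero cstar] (hprim : χ.IsPrimitive) (m : ℕ) :
    toArithmeticFunction (χ ·) * inducedGaussSums χ m = gaussDivisorFn χ m := by
  ext n
  rcases eq_or_ne n 0 with rfl | hn
  · simp
  have hterm (d : ℕ) (hd : d ∈ n.divisors) :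
      toArithmeticFunction (χ ·) d * inducedGaussSums χ m (n / d) =
        ∑ u ∈ range (n / d * cstar) with u.Coprime (n / d),
          e (m * (d * u : ℕ) / (n * cstar)) * χ (d * u : ℕ) := by
    have hdn : d * (n / d) = n := Nat.mul_div_cancel' (Nat.dvd_of_mem_divisors hd)
    have hd0 : d ≠ 0 := (Nat.pos_of_mem_divisors hd).ne'
    rw [inducedGaussSums_apply, gSum_mul_eq_sum_range χ (Nat.div_ne_zero_iff_of_dvd
      (Nat.dvd_of_mem_divisors hd) |>.mpr ⟨hn, hd0⟩), mul_sum]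
    refine sum_congr rfl fun u _ => ?_
    have he : e (m * (d * u : ℕ) / (n * cstar)) = e (m * u / ((n / d : ℕ) * cstar)) := by
      have hn' : (n : ℝ) = d * (n / d : ℕ) := by exact_mod_cast hdn.symm
      push_cast
      rw [hn', mul_left_comm, mul_assoc, mul_div_mul_left _ _ (by exact_mod_cast hd0)]
    rw [he]
    simp only [toArithmeticFunction, ArithmeticFunction.coe_mk, if_neg hd0, Nat.cast_mul, map_mul]
    ring
  rw [ArithmeticFunction.mul_apply, Nat.sum_divisorsAntidiagonal
    (fun a b => toArithmeticFunction (χ ·) a * inducedGaussSums χ m b), sum_congr rfl hterm,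
    ← sum_range_mul_eq_sum_divisors hn cstar (fun v => e (m * v / (n * cstar)) * χ v),
    sum_range_mul_e_mul_apply χ hn, sum_range_e_mul_apply_of_isPrimitive hprim,
    gaussDivisorFn_apply]

end GaussSum

open LSeries.notation

namespace ArithmeticFunction

theorem pmul_mul_of_map_mul {R : Type*} [CommSemiring R] {c : ArithmeticFunction R}
    (hc : ∀ a b, c (a * b) = c a * c b) (f g : ArithmeticFunction R) :
    (f * g).pmul c = f.pmul c * g.pmul c := by
  ext n
  simp only [pmul_apply, mul_apply, sum_mul]
  refine sum_congr rfl fun p hp => ?_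
  rw [← (Nat.mem_divisorsAntidiagonal.mp hp).1, hc]
  ring

theorem one_pmul_of_map_one {R : Type*} [CommSemiring R] {c : ArithmeticFunction R}
    (hc : c 1 = 1) : (1 : ArithmeticFunction R).pmul c = 1 := by
  ext n
  rw [pmul_apply, one_apply]
  split_ifs with hn
  · rw [hn, hc, mul_one]
  · rw [zero_mul]

variable (R : Type*) [Semiring R] (N : ℕ)

def coprimeIndicator : ArithmeticFunction R :=
  toArithmeticFunction fun n => if n.Coprime N then 1 else 0

variable {R N}

theorem coprimeIndicator_apply {n : ℕ} (hn : n ≠ 0) :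
    coprimeIndicator R N n = if n.Coprime N then 1 else 0 :=
  if_neg hn

theorem coprimeIndicator_mul (a b : ℕ) :
    coprimeIndicator R N (a * b) = coprimeIndicator R N a * coprimeIndicator R N b := by
  rcases eq_or_ne a 0 with rfl | ha
  · simp
  rcases eq_or_ne b 0 with rfl | hb
  · simp
  simp only [coprimeIndicator_apply (mul_ne_zero ha hb), coprimeIndicator_apply ha,
    coprimeIndicator_apply hb, Nat.coprime_mul_iff_left, ite_and, mul_ite, mul_one, mul_zero]
  split_ifs <;> rfl

theorem coprimeIndicator_one : coprimeIndicator R N 1 = 1 := by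
  rw [coprimeIndicator_apply one_ne_zero, if_pos (Nat.coprime_one_left N)]

theorem mul_pmul_coprimeIndicator {R : Type*} [CommSemiring R] (f g : ArithmeticFunction R) :
    (f * g).pmul (coprimeIndicator R N) =
      f.pmul (coprimeIndicator R N) * g.pmul (coprimeIndicator R N) :=
  pmul_mul_of_map_mul coprimeIndicator_mul f g

theorem one_pmul_coprimeIndicator {R : Type*} [CommSemiring R] :
    (1 : ArithmeticFunction R).pmul (coprimeIndicator R N) = 1 :=
  one_pmul_of_map_one coprimeIndicator_one

theorem term_pmul_coprimeIndicator_succ (f : ArithmeticFunction ℂ) (s : ℂ) (k : ℕ) :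
    LSeries.term ↗(f.pmul (coprimeIndicator ℂ N)) s (k + 1) =
      if (k + 1).Coprime N then f (k + 1) * ((k + 1 : ℕ) : ℂ) ^ (-s) else 0 := by
  rw [LSeries.term_of_ne_zero k.succ_ne_zero, pmul_apply, coprimeIndicator_apply k.succ_ne_zero,
    Complex.cpow_neg]
  split_ifs <;> simp [div_eq_mul_inv]

end ArithmeticFunction

open ArithmeticFunction

open scoped ArithmeticFunction.Moebius

theorem LSeriesSummable.pmul_coprimeIndicator {N : ℕ} {f : ArithmeticFunction ℂ} {s : ℂ}
    (hf : LSeriesSummable ↗f s) : LSeriesSummable ↗(f.pmul (coprimeIndicator ℂ N)) s := by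
  refine hf.norm.of_norm_bounded fun n => LSeries.norm_term_le s ?_
  rcases eq_or_ne n 0 with rfl | hn
  · simp
  rw [pmul_apply, coprimeIndicator_apply hn]
  split_ifs <;> simp

theorem LSeries_eq_tsum_term_succ {f : ℕ → ℂ} {s : ℂ} (hf : LSeriesSummable f s) :
    LSeries f s = ∑' k, LSeries.term f s (k + 1) := by
  rw [LSeries, tsum_eq_zero_add' ((summable_nat_add_iff 1).mpr hf), LSeries.term_zero, zero_add]

theorem LSeriesSummable_toArithmeticFunction_iff {f : ℕ → ℂ} {s : ℂ} :
    LSeriesSummable ↗(toArithmeticFunction f) s ↔ LSeriesSummable f s :=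
  LSeriesSummable_congr s fun hn => if_neg hn

theorem DirichletCharacter.toArithmeticFunction_mul_moebius {n : ℕ} (χ : DirichletCharacter ℂ n) :
    toArithmeticFunction (χ ·) * toArithmeticFunction (↗χ * ↗μ) = 1 :=
  DFunLike.coe_injective <| by
    rw [← LSeries.convolution, χ.convolution_mul_moebius]
    exact one_eq_delta.symm

section GaussDivisorFn

variable {cstar : ℕ} (χ : DirichletCharacter ℂ cstar) {m : ℕ} (hm : m ≠ 0)
include hm

theorem LSeriesSummable_gaussDivisorFn (s : ℂ) : LSeriesSummable ↗(gaussDivisorFn χ m) s := by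
  refine LSeriesSummable_zero.congr' s ?_
  filter_upwards [Filter.eventually_gt_atTop m] with n hn
  rw [gaussDivisorFn_apply,
    if_neg fun hdvd => hn.not_ge (Nat.le_of_dvd (Nat.pos_of_ne_zero hm) hdvd)]
  rfl

theorem natCast_cpow_one_sub_mul_div_cpow_sub_one {d : ℕ} (hd : d ∣ m) (s : ℂ) :
    (m : ℂ) ^ (1 - s) * ((m / d : ℕ) : ℂ) ^ (s - 1) = d / (d : ℂ) ^ s := by
  obtain ⟨k, rfl⟩ := hd
  have hd0 : (d : ℂ) ≠ 0 := by exact_mod_cast left_ne_zero_of_mul hm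
  have hk0 : (k : ℂ) ≠ 0 := by exact_mod_cast right_ne_zero_of_mul hm
  rw [Nat.mul_div_cancel_left k (Nat.pos_of_ne_zero (left_ne_zero_of_mul hm)), Nat.cast_mul,
    natCast_mul_natCast_cpow, mul_assoc, ← cpow_add _ _ hk0, sub_add_sub_cancel', sub_self,
    cpow_zero, mul_one, cpow_sub _ _ hd0, cpow_one]

theorem LSeries_pmul_coprimeIndicator_gaussDivisorFn (N : ℕ) (s : ℂ) :
    LSeries ↗((gaussDivisorFn χ m).pmul (coprimeIndicator ℂ N)) s =
      tau χ * (m : ℂ) ^ (1 - s) * sigmaN N (conjChar χ) (s - 1) m := by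
  rw [LSeries, tsum_eq_sum (s := m.divisors.filter (·.Coprime N)) fun n hn => ?_, sigmaN, mul_sum]
  · refine sum_congr rfl fun d hd => ?_
    obtain ⟨hdm, hdN⟩ := mem_filter.mp hd
    have hd0 : d ≠ 0 := (Nat.pos_of_mem_divisors hdm).ne'
    rw [LSeries.term_of_ne_zero hd0, pmul_apply, coprimeIndicator_apply hd0, if_pos hdN,
      gaussDivisorFn_apply, if_pos (Nat.dvd_of_mem_divisors hdm), mul_one, mul_div_right_comm,
      ← natCast_cpow_one_sub_mul_div_cpow_sub_one hm (Nat.dvd_of_mem_divisors hdm)]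
    ring
  · rcases eq_or_ne n 0 with rfl | hn0
    · exact LSeries.term_zero _ _
    rw [LSeries.term_of_ne_zero hn0, pmul_apply, coprimeIndicator_apply hn0, gaussDivisorFn_apply]
    simp only [mem_filter, Nat.mem_divisors, not_and] at hn
    split_ifs with hdvd hcop
    · exact absurd hcop (hn ⟨hdvd, hm⟩)
    all_goals simp

end GaussDivisorFn

section Twist

variable {n : ℕ} (χ : DirichletCharacter ℂ n) (N : ℕ) {s : ℂ} (hs : 1 < s.re)
include hs

theorem DirichletCharacter.LSeriesSummable_pmul_coprimeIndicator :
    LSeriesSummable ↗((toArithmeticFunction (χ ·)).pmul (coprimeIndicator ℂ N)) s :=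
  (LSeriesSummable_toArithmeticFunction_iff.mpr
    (χ.LSeriesSummable_of_one_lt_re hs)).pmul_coprimeIndicator

theorem DirichletCharacter.LSeriesSummable_moebius_pmul_coprimeIndicator :
    LSeriesSummable ↗((toArithmeticFunction (↗χ * ↗μ)).pmul (coprimeIndicator ℂ N)) s :=
  (LSeriesSummable_toArithmeticFunction_iff.mpr
    (χ.LSeriesSummable_mul (LSeriesSummable_moebius_iff.mpr hs))).pmul_coprimeIndicator

theorem LN_eq_LSeries :
    LN N χ s = LSeries ↗((toArithmeticFunction (χ ·)).pmul (coprimeIndicator ℂ N)) s := by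
  rw [LN, LSeries_eq_tsum_term_succ (χ.LSeriesSummable_pmul_coprimeIndicator N hs)]
  refine tsum_congr fun k => ?_
  rw [term_pmul_coprimeIndicator_succ]
  simp [toArithmeticFunction]

theorem LN_ne_zero : LN N χ s ≠ 0 := by
  have h := LSeries_mul' (χ.LSeriesSummable_pmul_coprimeIndicator N hs)
    (χ.LSeriesSummable_moebius_pmul_coprimeIndicator N hs)
  rw [← mul_pmul_coprimeIndicator, χ.toArithmeticFunction_mul_moebius, one_pmul_coprimeIndicator,
    one_eq_delta, LSeries_delta, Pi.one_apply] at h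
  rw [LN_eq_LSeries χ N hs]
  exact left_ne_zero_of_mul_eq_one h.symm

end Twist

theorem LSeriesSummable_pmul_coprimeIndicator_inducedGaussSums {cstar : ℕ} [NeZero cstar]
    {χ : DirichletCharacter ℂ cstar} (hprim : χ.IsPrimitive) (N : ℕ) {m : ℕ} (hm : m ≠ 0) {s : ℂ}
    (hs : 1 < s.re) : LSeriesSummable ↗((inducedGaussSums χ m).pmul (coprimeIndicator ℂ N)) s := by
  set X := (toArithmeticFunction (χ ·)).pmul (coprimeIndicator ℂ N)
  set M := (toArithmeticFunction (↗χ * ↗μ)).pmul (coprimeIndicator ℂ N)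
  set G := (inducedGaussSums χ m).pmul (coprimeIndicator ℂ N)
  set H := (gaussDivisorFn χ m).pmul (coprimeIndicator ℂ N)
  have hXM : X * M = 1 := by
    rw [← mul_pmul_coprimeIndicator, χ.toArithmeticFunction_mul_moebius, one_pmul_coprimeIndicator]
  have hXG : X * G = H := by
    rw [← mul_pmul_coprimeIndicator, toArithmeticFunction_mul_inducedGaussSums hprim]
  rw [show G = M * H by linear_combination M * hXG - G * hXM]
  exact LSeriesSummable_mul (χ.LSeriesSummable_moebius_pmul_coprimeIndicator N hs)
    (LSeriesSummable_gaussDivisorFn χ hm s).pmul_coprimeIndicator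

theorem statement_2_general (N : ℕ) (cstar : ℕ) (hcs : 0 < cstar)
    (χ : DirichletCharacter ℂ cstar) (hprim : χ.IsPrimitive)
    (m : ℕ) (hm : 0 < m) (s : ℂ) (hs : 1 < s.re) :
    Summable (fun ℓ : ℕ => if Nat.Coprime (ℓ + 1) N then
        gSum χ ((ℓ + 1) * cstar) (m : ℤ) * ((ℓ + 1 : ℕ) : ℂ) ^ (-s) else 0) ∧
    tau χ * (m : ℂ) ^ (1 - s) * sigmaN N (conjChar χ) (s - 1) m * (LN N χ s)⁻¹ =
      ∑' ℓ : ℕ, if Nat.Coprime (ℓ + 1) N then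
        gSum χ ((ℓ + 1) * cstar) (m : ℤ) * ((ℓ + 1 : ℕ) : ℂ) ^ (-s) else 0 := by
  have : NeZero cstar := ⟨hcs.ne'⟩
  have hGs := LSeriesSummable_pmul_coprimeIndicator_inducedGaussSums hprim N hm.ne' hs
  have hI : (fun ℓ : ℕ => if Nat.Coprime (ℓ + 1) N then
      gSum χ ((ℓ + 1) * cstar) (m : ℤ) * ((ℓ + 1 : ℕ) : ℂ) ^ (-s) else 0) =
      fun ℓ => LSeries.term ↗((inducedGaussSums χ m).pmul (coprimeIndicator ℂ N)) s (ℓ + 1) :=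
    funext fun ℓ => (term_pmul_coprimeIndicator_succ (inducedGaussSums χ m) s ℓ).symm
  refine ⟨hI ▸ (summable_nat_add_iff 1).mpr hGs, ?_⟩
  rw [hI, ← LSeries_eq_tsum_term_succ hGs, ← LSeries_pmul_coprimeIndicator_gaussDivisorFn χ hm.ne',
    ← toArithmeticFunction_mul_inducedGaussSums hprim, mul_pmul_coprimeIndicator,
    LSeries_mul' (χ.LSeriesSummable_pmul_coprimeIndicator N hs) hGs,
    ← LN_eq_LSeries χ N hs, mul_comm, inv_mul_cancel_left₀ (LN_ne_zero χ N hs)]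

/-- Lemma on nonprimitive Gauss sums: for `Re(s) > 1` the series
`I^{(N)}(s,χ*,c*,m) = ∑_{ℓ ≥ 1, (ℓ,N)=1} g(χ*, ℓ c*, m) ℓ^{-s}` converges and equals
`τ(χ*) m^{1-s} σ^{(N)}_{s-1}(m, conj χ*) L^{(N)}(s, χ*)⁻¹`. -/
theorem statement_2 (N : ℕ) (hN : 0 < N) (cstar : ℕ) (hcs : 0 < cstar)
    (χ : DirichletCharacter ℂ cstar) (hprim : χ.IsPrimitive) (hcop : Nat.Coprime cstar N)
    (m : ℕ) (hm : 0 < m) (s : ℂ) (hs : 1 < s.re) :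
    Summable (fun ℓ : ℕ => if Nat.Coprime (ℓ + 1) N then
        gSum χ ((ℓ + 1) * cstar) (m : ℤ) * ((ℓ + 1 : ℕ) : ℂ) ^ (-s) else 0) ∧
    tau χ * (m : ℂ) ^ (1 - s) * sigmaN N (conjChar χ) (s - 1) m * (LN N χ s)⁻¹ =
      ∑' ℓ : ℕ, if Nat.Coprime (ℓ + 1) N then
        gSum χ ((ℓ + 1) * cstar) (m : ℤ) * ((ℓ + 1 : ℕ) : ℂ) ^ (-s) else 0 :=
  statement_2_general N cstar hcs χ hprim m hm s hs

end
end

section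
/- Let N be a positive integer, ψ a Dirichlet character modulo N, χ* any Dirichlet character, and s ∈ ℂ. Let h be any complex-valued function on pairs of positive integers, and define 𝐡(q,m) = ∑_{d₂ | q} ∑_{d₁ℓ = m} ψ(d₂)·χ*(d₁d₂)·d₂^{−s}·h(qd₁/d₂, ℓ) for all positive integers q, m. Then the Möbius inversion formula h(q,m) = ∑_{e₀ | m} ∑_{e₁ | qe₀} μ(e₀)·μ(e₁)·χ*(e₀e₁)·ψ(e₁)·e₁^{−s}·𝐡(qe₀/e₁, m/e₀) holds for all positive integers q, m. -/
/-! For completely multiplicative `c` with `c 1 = 1`, the Dirichlet inverse of `c` is `μ c`.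
The relation defining `𝐡` is a Dirichlet convolution with `ψ χ* n^{-s}` in the first variable,
followed by one with `χ*` in the second variable (where `d₁` also enters the first argument of
`h`); inverting the first convolution and then the second recovers `h`. -/

open Complex
open scoped Classical

noncomputable section

open ArithmeticFunction
open scoped ArithmeticFunction.Moebius

theorem Nat.div_ne_zero_of_mem_divisors {d n : ℕ} (hd : d ∈ n.divisors) : n / d ≠ 0 :=
  (Nat.div_pos (Nat.divisor_le hd) (Nat.pos_of_mem_divisors hd)).ne'

namespace ArithmeticFunction

variable {R : Type*} [CommRing R]

theorem mul_apply_eq_sum_divisors (f g : ArithmeticFunction R) (n : ℕ) :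
    (f * g) n = ∑ d ∈ n.divisors, f d * g (n / d) := by
  rw [mul_apply, Nat.sum_divisorsAntidiagonal fun a b => f a * g b]

theorem toArithmeticFunction_apply_of_ne_zero (f : ℕ → R) {n : ℕ} (hn : n ≠ 0) :
    toArithmeticFunction f n = f n :=
  if_neg hn

theorem toArithmeticFunction_mul_apply (f g : ℕ → R) (n : ℕ) :
    (toArithmeticFunction f * toArithmeticFunction g) n = ∑ d ∈ n.divisors, f d * g (n / d) := by
  rw [mul_apply_eq_sum_divisors]
  refine Finset.sum_congr rfl fun d hd => ?_
  rw [toArithmeticFunction_apply_of_ne_zero _ (Nat.pos_of_mem_divisors hd).ne',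
    toArithmeticFunction_apply_of_ne_zero _ (Nat.div_ne_zero_of_mem_divisors hd)]

theorem toArithmeticFunction_moebius_mul_mul_self {c : ℕ → R} (hc1 : c 1 = 1)
    (hc : ∀ a b, c (a * b) = c a * c b) :
    toArithmeticFunction (fun n => (μ n : R) * c n) * toArithmeticFunction c = 1 := by
  ext n
  rcases eq_or_ne n 0 with rfl | hn
  · simp
  calc (toArithmeticFunction (fun n => (μ n : R) * c n) * toArithmeticFunction c) n
      = c n * ∑ d ∈ n.divisors, (μ d : R) := by
        rw [toArithmeticFunction_mul_apply, Finset.mul_sum]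
        refine Finset.sum_congr rfl fun d hd => ?_
        rw [mul_assoc, ← hc, Nat.mul_div_cancel' (Nat.dvd_of_mem_divisors hd), mul_comm]
    _ = (1 : ArithmeticFunction R) n := by
        have hμ := DFunLike.congr_fun (coe_moebius_mul_coe_zeta (R := R)) n
        simp only [coe_mul_zeta_apply, intCoe_apply] at hμ
        rw [hμ]
        rcases eq_or_ne n 1 with rfl | hn1 <;> simp [*]

theorem sum_divisors_moebius_mul_sum_divisors {c : ℕ → R} (hc1 : c 1 = 1)
    (hc : ∀ a b, c (a * b) = c a * c b) (F : ℕ → R) {n : ℕ} (hn : n ≠ 0) :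
    ∑ e ∈ n.divisors, (μ e : R) * c e * ∑ d ∈ (n / e).divisors, c d * F (n / e / d) = F n := by
  have hinv : (toArithmeticFunction (fun n => (μ n : R) * c n) *
      (toArithmeticFunction c * toArithmeticFunction F)) n = F n := by
    rw [← mul_assoc, toArithmeticFunction_moebius_mul_mul_self hc1 hc, one_mul,
      toArithmeticFunction_apply_of_ne_zero _ hn]
  rw [← hinv, mul_apply_eq_sum_divisors]
  refine Finset.sum_congr rfl fun e he => ?_
  rw [toArithmeticFunction_apply_of_ne_zero _ (Nat.pos_of_mem_divisors he).ne',
    toArithmeticFunction_mul_apply]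

end ArithmeticFunction

theorem eq_sum_sum_moebius_of_eq_sum_sum {R : Type*} [CommRing R] {a b : ℕ → R}
    (ha1 : a 1 = 1) (ha : ∀ x y, a (x * y) = a x * a y)
    (hb1 : b 1 = 1) (hb : ∀ x y, b (x * y) = b x * b y) {h bh : ℕ → ℕ → R}
    (hbh : ∀ q m : ℕ, 0 < q → 0 < m →
      bh q m = ∑ d₂ ∈ q.divisors, ∑ d₁ ∈ m.divisors, b d₂ * a d₁ * h (q * d₁ / d₂) (m / d₁))
    {q m : ℕ} (hq : 0 < q) (hm : 0 < m) :
    h q m = ∑ e₀ ∈ m.divisors, ∑ e₁ ∈ (q * e₀).divisors,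
      (μ e₀ : R) * μ e₁ * a e₀ * b e₁ * bh (q * e₀ / e₁) (m / e₀) := by
  have hbh_regroup : ∀ {q m : ℕ}, 0 < q → 0 < m →
      bh q m = ∑ d₂ ∈ q.divisors, b d₂ * ∑ d₁ ∈ m.divisors, a d₁ * h (q / d₂ * d₁) (m / d₁) := by
    intro q m hq hm
    rw [hbh q m hq hm]
    refine Finset.sum_congr rfl fun d₂ hd₂ => ?_
    rw [Finset.mul_sum]
    refine Finset.sum_congr rfl fun d₁ _ => ?_
    rw [Nat.mul_div_right_comm (Nat.dvd_of_mem_divisors hd₂), mul_assoc]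
  have first_inversion : ∀ e₀ ∈ m.divisors,
      ∑ e₁ ∈ (q * e₀).divisors, (μ e₁ : R) * b e₁ * bh (q * e₀ / e₁) (m / e₀) =
        ∑ d₁ ∈ (m / e₀).divisors, a d₁ * h (q * e₀ * d₁) (m / e₀ / d₁) := fun e₀ he₀ => by
    have hqe₀ : q * e₀ ≠ 0 := Nat.mul_ne_zero hq.ne' (Nat.pos_of_mem_divisors he₀).ne'
    rw [← sum_divisors_moebius_mul_sum_divisors hb1 hb
      (fun r => ∑ d₁ ∈ (m / e₀).divisors, a d₁ * h (r * d₁) (m / e₀ / d₁)) hqe₀]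
    refine Finset.sum_congr rfl fun e₁ he₁ => ?_
    rw [hbh_regroup (Nat.pos_of_ne_zero (Nat.div_ne_zero_of_mem_divisors he₁))
      (Nat.pos_of_ne_zero (Nat.div_ne_zero_of_mem_divisors he₀))]
  have second_inversion : ∑ e₀ ∈ m.divisors, (μ e₀ : R) * a e₀ *
      ∑ d₁ ∈ (m / e₀).divisors, a d₁ * h (q * e₀ * d₁) (m / e₀ / d₁) = h q m := by
    -- Since `e₀ d₁ = m / (m / e₀ / d₁)`, the summand is a function of `m / e₀ / d₁` alone.
    have hinv := sum_divisors_moebius_mul_sum_divisors ha1 ha (fun k => h (q * (m / k)) k) hm.ne'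
    rw [Nat.div_self hm, mul_one] at hinv
    rw [← hinv]
    refine Finset.sum_congr rfl fun e₀ he₀ => congrArg _ (Finset.sum_congr rfl fun d₁ hd₁ => ?_)
    have hdvd : e₀ * d₁ ∣ m :=
      (Nat.dvd_div_iff_mul_dvd (Nat.dvd_of_mem_divisors he₀)).mp (Nat.dvd_of_mem_divisors hd₁)
    rw [Nat.div_div_eq_div_mul, Nat.div_div_self hdvd hm.ne', mul_assoc]
  rw [← second_inversion]
  refine Finset.sum_congr rfl fun e₀ he₀ => ?_
  rw [← first_inversion e₀ he₀, Finset.mul_sum]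
  exact Finset.sum_congr rfl fun e₁ _ => by ring

theorem statement_3_general (N M : ℕ) (ψ : DirichletCharacter ℂ N)
    (χ : DirichletCharacter ℂ M) (s : ℂ) (h bh : ℕ → ℕ → ℂ)
    (hbh : ∀ q m : ℕ, 0 < q → 0 < m → bh q m =
      ∑ d₂ ∈ q.divisors, ∑ d₁ ∈ m.divisors,
        ψ ((d₂ : ℕ) : ZMod N) * χ ((d₁ * d₂ : ℕ) : ZMod M) * (d₂ : ℂ) ^ (-s) *
          h (q * d₁ / d₂) (m / d₁)) :
    ∀ q m : ℕ, 0 < q → 0 < m →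
      h q m = ∑ e₀ ∈ m.divisors, ∑ e₁ ∈ (q * e₀).divisors,
        ((ArithmeticFunction.moebius e₀ : ℤ) : ℂ) * ((ArithmeticFunction.moebius e₁ : ℤ) : ℂ) *
          χ ((e₀ * e₁ : ℕ) : ZMod M) * ψ ((e₁ : ℕ) : ZMod N) * (e₁ : ℂ) ^ (-s) *
          bh (q * e₀ / e₁) (m / e₀) := by
  intro q m hq hm
  set a : ℕ → ℂ := fun k => χ k
  set b : ℕ → ℂ := fun k => ψ k * χ k * (k : ℂ) ^ (-s)
  have hb : ∀ x y, b (x * y) = b x * b y := fun x y => by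
    simp only [b, Nat.cast_mul, map_mul, natCast_mul_natCast_cpow]
    ring
  have hbh_factored : ∀ q m : ℕ, 0 < q → 0 < m → bh q m =
      ∑ d₂ ∈ q.divisors, ∑ d₁ ∈ m.divisors, b d₂ * a d₁ * h (q * d₁ / d₂) (m / d₁) := by
    intro q m hq hm
    simp only [hbh q m hq hm, a, b, Nat.cast_mul, map_mul]
    exact Finset.sum_congr rfl fun _ _ => Finset.sum_congr rfl fun _ _ => by ring
  rw [eq_sum_sum_moebius_of_eq_sum_sum (by simp [a]) (by simp [a]) (by simp [b]) hb hbh_factored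
    hq hm]
  simp only [a, b, Nat.cast_mul, map_mul]
  exact Finset.sum_congr rfl fun _ _ => Finset.sum_congr rfl fun _ _ => by ring

/-- Möbius inversion: if
`𝐡(q,m) = ∑_{d₂ ∣ q} ∑_{d₁ℓ = m} ψ(d₂) χ*(d₁d₂) d₂^{-s} h(qd₁/d₂, ℓ)`, then
`h(q,m) = ∑_{e₀ ∣ m} ∑_{e₁ ∣ qe₀} μ(e₀) μ(e₁) χ*(e₀e₁) ψ(e₁) e₁^{-s} 𝐡(qe₀/e₁, m/e₀)`. -/
theorem statement_3 (N M : ℕ) (hN : 0 < N) (ψ : DirichletCharacter ℂ N)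
    (χ : DirichletCharacter ℂ M) (s : ℂ) (h bh : ℕ → ℕ → ℂ)
    (hbh : ∀ q m : ℕ, 0 < q → 0 < m → bh q m =
      ∑ d₂ ∈ q.divisors, ∑ d₁ ∈ m.divisors,
        ψ ((d₂ : ℕ) : ZMod N) * χ ((d₁ * d₂ : ℕ) : ZMod M) * (d₂ : ℂ) ^ (-s) *
          h (q * d₁ / d₂) (m / d₁)) :
    ∀ q m : ℕ, 0 < q → 0 < m →
      h q m = ∑ e₀ ∈ m.divisors, ∑ e₁ ∈ (q * e₀).divisors,
        ((ArithmeticFunction.moebius e₀ : ℤ) : ℂ) * ((ArithmeticFunction.moebius e₁ : ℤ) : ℂ) *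
          χ ((e₀ * e₁ : ℕ) : ZMod M) * ψ ((e₁ : ℕ) : ZMod N) * (e₁ : ℂ) ^ (-s) *
          bh (q * e₀ / e₁) (m / e₀) :=
  statement_3_general N M ψ χ s h bh hbh

end
end

section
/- Let N, ψ, A, Ã be as in the context, with Ã satisfying its Hecke relation, A(q,n) = ψ(nq)·Ã(n,q) whenever (nq,N)=1, and the twisted functional-equation hypothesis in force. Let q be a positive integer with (q,N)=1 and χ* a primitive Dirichlet character modulo c* with (c*,N)=1, and let G_± denote G₊ if χ*(−1)=1 and G₋ if χ*(−1)=−1. Then, for Re(w) sufficiently large, the double Dirichlet series Z(s,w) = (∑_{n≥1,(n,N)=1} A(q,n)n^{−(2w−s)}) · L(s,F×χ*) / L^{(N)}(2w−2s+1, conj(χ*)) satisfies, for −Re(s) sufficiently large, Z(s,w) = G_±(s)·ψ(c*)·χ*(N)·c*^{−3s}·τ(χ*)³ · ∑_{n≥1,(n,N)=1} ∑_{d₁ | q} ∑_{d₀ ≥ 1} Ã(nd₁, qd₀/d₁)·ψ(nq)·conj(χ*)(d₀d₁)·n^{−(2w−s)}·(d₀d₁)^{−(1−s)}, where L(s,F×χ*)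 denotes the holomorphic continuation of ∑_n A(1,n)χ*(n)n^{−s}. -/
open Complex
open scoped Classical

noncomputable section

/-!
Write `u = 1 - s`, `v = 2w - s`. The functional equation turns `L(s, F × χ*)` into the
`G_±`-factor times `L(u, F̃ × χ̄*)`, and for `Re u`, `Re v` large every series below converges
absolutely. Since `A(q,n) = ψ(nq) Ã(n,q)`, the Hecke relation expands
`A(q,n) Ã(1,m) = ψ(nq) ∑_{abc = m, b ∣ q, c ∣ n} Ã(bn/c, aq/b) ψ̄(c)`. Substituting `n = cn'`,
`m = abc`, the factor `ψ(c) ψ̄(c)` is the indicator of `(c, N) = 1`, so the variable `c` splits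
off as `L^{(N)}(u + v, χ̄*)` and what remains is the dual series. Finally `L^{(N)}(u + v, χ̄*)`
does not vanish for `Re(u + v) ≥ 2`, because `ζ(2) - 1 < 1`.
-/

lemma summable_pnat_rpow {p : ℝ} (hp : p < -1) : Summable fun n : ℕ+ => ((n : ℕ) : ℝ) ^ p :=
  (Real.summable_nat_rpow.mpr hp).comp_injective PNat.coe_injective

lemma hasSum_inv_sq_add_two :
    HasSum (fun n : ℕ => 1 / ((n : ℝ) + 2) ^ 2) (Real.pi ^ 2 / 6 - 1) := by
  have h := (hasSum_nat_add_iff' 2).mpr hasSum_zeta_two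
  norm_num [Finset.sum_range_succ] at h
  simpa [add_comm] using h

lemma tsum_succ_ne_zero_of_norm_le {f : ℕ → ℂ} (h1 : f 1 = 1)
    (hf : ∀ n : ℕ, ‖f (n + 2)‖ ≤ 1 / ((n : ℝ) + 2) ^ 2) : ∑' n, f (n + 1) ≠ 0 := by
  have htail : Summable fun n => ‖f (n + 2)‖ :=
    .of_nonneg_of_le (fun _ => norm_nonneg _) hf hasSum_inv_sq_add_two.summable
  have hsum : Summable fun n => f (n + 1) :=
    (summable_nat_add_iff 1).mp htail.of_norm
  have hsmall : ‖∑' n, f (n + 2)‖ < 1 := calc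
    ‖∑' n, f (n + 2)‖ ≤ ∑' n, ‖f (n + 2)‖ := norm_tsum_le_tsum_norm htail
    _ ≤ ∑' n : ℕ, 1 / ((n : ℝ) + 2) ^ 2 :=
      htail.tsum_le_tsum hf hasSum_inv_sq_add_two.summable
    _ = Real.pi ^ 2 / 6 - 1 := hasSum_inv_sq_add_two.tsum_eq
    _ < 1 := by nlinarith [Real.pi_lt_d2, Real.pi_pos]
  rw [hsum.tsum_eq_zero_add, h1]
  intro h
  rw [eq_neg_of_add_eq_zero_right h, norm_neg, norm_one] at hsmall
  exact lt_irrefl _ hsmall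

lemma eq_of_eq_on_re_gt {f g : ℂ → ℂ} (hf : Differentiable ℂ f) (hg : Differentiable ℂ g)
    {T : ℝ} (hfg : ∀ s : ℂ, T < s.re → f s = g s) : f = g := by
  have hmem : ((T + 1 : ℝ) : ℂ) ∈ {z : ℂ | T < z.re} := by simp
  exact (analyticOnNhd_univ_iff_differentiable.mpr hf).eq_of_eventuallyEq
    (analyticOnNhd_univ_iff_differentiable.mpr hg) (Filter.eventuallyEq_of_mem
      ((isOpen_lt continuous_const Complex.continuous_re).mem_nhds hmem) hfg)

lemma norm_natCast_cpow_neg {n : ℕ} (hn : 0 < n) (s : ℂ) :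
    ‖(n : ℂ) ^ (-s)‖ = (n : ℝ) ^ (-s.re) := by
  rw [Complex.norm_natCast_cpow_of_pos hn, Complex.neg_re]

lemma rpow_mul_rpow_neg {x : ℝ} (hx : 0 < x) (C σ : ℝ) : x ^ C * x ^ (-σ) = x ^ (C - σ) := by
  rw [← Real.rpow_add hx, sub_eq_add_neg]

lemma DirichletCharacter.apply_natCast_eq_zero_of_not_coprime {N : ℕ}
    (ψ : DirichletCharacter ℂ N) {k : ℕ} (hk : ¬ k.Coprime N) : ψ k = 0 :=
  ψ.map_nonunit (mt (ZMod.isUnit_iff_coprime k N).mp hk)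

lemma DirichletCharacter.mul_conjChar_natCast {N : ℕ} (ψ : DirichletCharacter ℂ N) (k : ℕ) :
    ψ k * conjChar ψ k = if k.Coprime N then 1 else 0 := by
  split_ifs with hk
  · have hu : IsUnit (k : ZMod N) := (ZMod.isUnit_iff_coprime k N).mpr hk
    have hnorm : ‖ψ k‖ = 1 := by rw [← hu.unit_spec]; exact ψ.unit_norm_eq_one hu.unit
    rw [conjChar, MulChar.ringHomComp_apply, Complex.mul_conj', hnorm]
    norm_num
  · rw [ψ.apply_natCast_eq_zero_of_not_coprime hk, zero_mul]

namespace DoubleDirichlet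

def SatisfiesHecke {N : ℕ} (ψ : DirichletCharacter ℂ N) (F : ℕ → ℕ → ℂ) : Prop :=
  ∀ m n₁ n₂ : ℕ, 0 < m → 0 < n₁ → 0 < n₂ → Nat.Coprime (n₁ * n₂) N →
    F 1 m * F n₂ n₁ = heckeRHS2 ψ F m n₁ n₂

def IsPolyBounded (F : ℕ → ℕ → ℂ) (K C : ℝ) : Prop :=
  ∀ m n : ℕ, 0 < m → 0 < n → ‖F m n‖ ≤ K * ((m * n : ℕ) : ℝ) ^ C

section Terms

variable {N : ℕ} (ψ : DirichletCharacter ℂ N) (At : ℕ → ℕ → ℂ) (q : ℕ) {cs : ℕ}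
  (χ : DirichletCharacter ℂ cs) (u v : ℂ)

/-- `A(q,n) n^{-v}`, written as `ψ(nq) Ã(n,q) n^{-v}`, which vanishes unless `(nq, N) = 1`. -/
def aTerm (n : ℕ) : ℂ := ψ ((n * q : ℕ) : ZMod N) * At n q * (n : ℂ) ^ (-v)

def twistTerm (m : ℕ) : ℂ := At 1 m * conjChar χ (m : ZMod cs) * (m : ℂ) ^ (-u)

def dualTerm (n d a : ℕ) : ℂ :=
  At (n * d) (q * a / d) * ψ ((n * q : ℕ) : ZMod N) * conjChar χ ((a * d : ℕ) : ZMod cs) *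
    (n : ℂ) ^ (-v) * ((a * d : ℕ) : ℂ) ^ (-u)

def heckeTerm (n m : ℕ) (t : ℕ × ℕ × ℕ) : ℂ :=
  if t.1 * (t.2.1 * t.2.2) = m ∧ t.2.1 ∣ q ∧ t.2.2 ∣ n then
    ψ ((n * q : ℕ) : ZMod N) * (n : ℂ) ^ (-v) * conjChar χ (m : ZMod cs) * (m : ℂ) ^ (-u) *
      (At (t.2.1 * n / t.2.2) (t.1 * q / t.2.1) * conjChar ψ (t.2.2 : ZMod N))
  else 0

end Terms

def lTerm (N : ℕ) {cs : ℕ} (χ : DirichletCharacter ℂ cs) (z : ℂ) (c : ℕ) : ℂ :=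
  if c.Coprime N then χ (c : ZMod cs) * (c : ℂ) ^ (-z) else 0

section Hecke

variable {N : ℕ} (ψ : DirichletCharacter ℂ N) (At : ℕ → ℕ → ℂ) (q : ℕ) {cs : ℕ}
  (χ : DirichletCharacter ℂ cs) (u v : ℂ)

lemma tsum_heckeTerm {n m : ℕ} (hm : 0 < m) :
    ∑' t, heckeTerm ψ At q χ u v n m t =
      ψ ((n * q : ℕ) : ZMod N) * (n : ℂ) ^ (-v) * conjChar χ (m : ZMod cs) * (m : ℂ) ^ (-u) *
        heckeRHS2 (conjChar ψ) At m q n := by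
  rw [heckeRHS2, Finset.mul_sum, Finset.sum_filter, tsum_eq_sum]
  · rfl
  rintro ⟨a, b, c⟩ ht
  refine if_neg fun ⟨habc, _⟩ => ht ?_
  have hle : ∀ x, x ∣ m → x < m + 1 := fun x hx => Nat.lt_succ_of_le (Nat.le_of_dvd hm hx)
  simp only [Finset.mem_product, Finset.mem_range]
  exact ⟨hle a ⟨_, habc.symm⟩, hle b ⟨a * c, by rw [← habc]; ring⟩,
    hle c ⟨a * b, by rw [← habc]; ring⟩⟩

lemma aTerm_mul_twistTerm (hHt : SatisfiesHecke (conjChar ψ) At) {n m : ℕ} (hq : 0 < q)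
    (hn : 0 < n) (hm : 0 < m) :
    aTerm ψ At q v n * twistTerm At χ u m = ∑' t, heckeTerm ψ At q χ u v n m t := by
  rw [tsum_heckeTerm _ _ _ _ _ _ hm]
  by_cases hnq : (n * q).Coprime N
  · rw [← hHt m q n hm hq hn (by rwa [mul_comm])]
    simp only [aTerm, twistTerm]
    ring
  · rw [aTerm, ψ.apply_natCast_eq_zero_of_not_coprime hnq]
    ring

lemma heckeTerm_eq_dualTerm_mul_lTerm {n d a c : ℕ} (hd : d ∣ q) (hc : 0 < c) :
    heckeTerm ψ At q χ u v (c * n) (a * d * c) (a, d, c) =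
      dualTerm ψ At q χ u v n d a * lTerm N (conjChar χ) (u + v) c := by
  have hc' : (c : ℂ) ≠ 0 := Nat.cast_ne_zero.mpr hc.ne'
  rw [heckeTerm, if_pos ⟨by ring, hd, dvd_mul_right c n⟩, lTerm, dualTerm,
    show d * (c * n) / c = n * d by rw [Nat.mul_left_comm, Nat.mul_div_cancel_left _ hc, mul_comm],
    show a * q / d = q * a / d by rw [mul_comm], show c * n * q = c * (n * q) by ring,
    Nat.cast_mul c (n * q), map_mul, Nat.cast_mul (a * d) c, map_mul, Nat.cast_mul c n,
    Nat.cast_mul (a * d) c, Complex.natCast_mul_natCast_cpow, Complex.natCast_mul_natCast_cpow,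
    neg_add, Complex.cpow_add _ _ hc']
  split_ifs with hcN
  · have hψ := ψ.mul_conjChar_natCast c
    rw [if_pos hcN] at hψ
    linear_combination (At (n * d) (q * a / d) * ψ ((n * q : ℕ) : ZMod N) *
      conjChar χ ((a * d : ℕ) : ZMod cs) * (n : ℂ) ^ (-v) * ((a * d : ℕ) : ℂ) ^ (-u) *
      conjChar χ (c : ZMod cs) * (c : ℂ) ^ (-u) * (c : ℂ) ^ (-v)) * hψ
  · simp [ψ.apply_natCast_eq_zero_of_not_coprime hcN]

end Hecke

/-- `(n', d, a, c) ↦ (n, m, t)` with `n = c n'`, `m = a d c` and Hecke triple `t = (a, d, c)`. -/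
def heckeIndex (q : ℕ) : (ℕ+ × q.divisors × ℕ+) × ℕ+ → (ℕ+ × ℕ+) × ℕ × ℕ × ℕ
  | ((n, d, a), c) =>
    ((c * n, ⟨a * d * c, Nat.mul_pos (Nat.mul_pos a.pos (Nat.pos_of_mem_divisors d.2)) c.pos⟩),
      ((a : ℕ), (d : ℕ), (c : ℕ)))

lemma heckeIndex_injective (q : ℕ) : Function.Injective (heckeIndex q) := by
  rintro ⟨⟨n, d, a⟩, c⟩ ⟨⟨n', d', a'⟩, c'⟩ h
  simp only [heckeIndex, Prod.mk.injEq] at h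
  obtain ⟨hnm, ha, hd, hc⟩ := h
  have hc' : c = c' := PNat.coe_injective hc
  have ha' : a = a' := PNat.coe_injective ha
  have hd' : d = d' := Subtype.ext hd
  subst hc' ha' hd'
  rw [mul_left_cancel (congrArg Prod.fst hnm)]

section Index

variable {N : ℕ} (ψ : DirichletCharacter ℂ N) (At : ℕ → ℕ → ℂ) (q : ℕ) {cs : ℕ}
  (χ : DirichletCharacter ℂ cs) (u v : ℂ)

lemma heckeTerm_heckeIndex (x : (ℕ+ × q.divisors × ℕ+) × ℕ+) :
    heckeTerm ψ At q χ u v (heckeIndex q x).1.1 (heckeIndex q x).1.2 (heckeIndex q x).2 =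
      dualTerm ψ At q χ u v x.1.1 x.1.2.1 x.1.2.2 * lTerm N (conjChar χ) (u + v) x.2 := by
  obtain ⟨⟨n, d, a⟩, c⟩ := x
  simpa [heckeIndex] using heckeTerm_eq_dualTerm_mul_lTerm ψ At q χ u v
    (Nat.dvd_of_mem_divisors d.2) c.pos (n := n) (a := a)

lemma heckeTerm_eq_zero_of_notMem_range (hq : 0 < q) {x : (ℕ+ × ℕ+) × ℕ × ℕ × ℕ}
    (hx : x ∉ Set.range (heckeIndex q)) : heckeTerm ψ At q χ u v x.1.1 x.1.2 x.2 = 0 := by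
  obtain ⟨⟨n, m⟩, a, b, c⟩ := x
  refine if_neg fun ⟨habc, hb, hc⟩ => hx ?_
  dsimp only at habc hb hc
  obtain ⟨k, hk⟩ := hc
  have hpos : 0 < a * (b * c) := habc ▸ m.pos
  have ha : 0 < a := Nat.pos_of_mul_pos_right hpos
  have hb0 : 0 < b := Nat.pos_of_mul_pos_right (Nat.pos_of_mul_pos_left hpos)
  have hc0 : 0 < c := Nat.pos_of_mul_pos_left (Nat.pos_of_mul_pos_left hpos)
  have hk0 : 0 < k := Nat.pos_of_mul_pos_left (hk ▸ n.pos)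
  refine ⟨((⟨k, hk0⟩, ⟨b, Nat.mem_divisors.mpr ⟨hb, hq.ne'⟩⟩, ⟨a, ha⟩), ⟨c, hc0⟩), ?_⟩
  simp only [heckeIndex, Prod.mk.injEq]
  refine ⟨Prod.ext (PNat.eq hk.symm) (PNat.eq ?_), rfl, trivial, rfl⟩
  change a * b * c = m
  rw [← habc, mul_assoc]

end Index

section Bounds

variable {N : ℕ} (ψ : DirichletCharacter ℂ N) {At : ℕ → ℕ → ℂ} (q : ℕ) {cs : ℕ}
  (χ : DirichletCharacter ℂ cs) (u v : ℂ) {K C : ℝ}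

lemma norm_aTerm_le (hAt : IsPolyBounded At K C) (hq : 0 < q) (n : ℕ+) :
    ‖aTerm ψ At q v n‖ ≤ K * (q : ℝ) ^ C * (n : ℝ) ^ (C - v.re) := by
  have hAnq := hAt n q n.pos hq
  rw [Nat.cast_mul, Real.mul_rpow (by positivity) (by positivity)] at hAnq
  rw [aTerm, norm_mul, norm_mul, norm_natCast_cpow_neg n.pos,
    ← rpow_mul_rpow_neg (Nat.cast_pos.mpr n.pos)]
  calc ‖ψ _‖ * ‖At n q‖ * (n : ℝ) ^ (-v.re)
      = ‖ψ _‖ * (n : ℝ) ^ (-v.re) * ‖At n q‖ := by ring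
    _ ≤ 1 * (n : ℝ) ^ (-v.re) * (K * ((n : ℝ) ^ C * (q : ℝ) ^ C)) := by
        gcongr
        exact ψ.norm_le_one _
    _ = _ := by ring

lemma norm_twistTerm_le (hAt : IsPolyBounded At K C) (m : ℕ+) :
    ‖twistTerm At χ u m‖ ≤ K * (m : ℝ) ^ (C - u.re) := by
  have hA1m := hAt 1 m one_pos m.pos
  rw [one_mul] at hA1m
  rw [twistTerm, norm_mul, norm_mul, norm_natCast_cpow_neg m.pos,
    ← rpow_mul_rpow_neg (Nat.cast_pos.mpr m.pos)]
  calc ‖At 1 m‖ * ‖conjChar χ _‖ * (m : ℝ) ^ (-u.re)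
      = ‖conjChar χ _‖ * (m : ℝ) ^ (-u.re) * ‖At 1 m‖ := by ring
    _ ≤ 1 * (m : ℝ) ^ (-u.re) * (K * (m : ℝ) ^ C) := by
        gcongr
        exact DirichletCharacter.norm_le_one _ _
    _ = _ := by ring

lemma norm_lTerm_le (z : ℂ) {c : ℕ} (hc : 0 < c) : ‖lTerm N χ z c‖ ≤ (c : ℝ) ^ (-z.re) := by
  rw [lTerm]
  split_ifs
  · rw [norm_mul, norm_natCast_cpow_neg hc]
    exact mul_le_of_le_one_left (by positivity) (DirichletCharacter.norm_le_one _ _)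
  · rw [norm_zero]
    positivity

lemma norm_dualTerm_le (hAt : IsPolyBounded At K C) (hu : 0 ≤ u.re) {n d a : ℕ}
    (hn : 0 < n) (hd : d ∈ q.divisors) (ha : 0 < a) :
    ‖dualTerm ψ At q χ u v n d a‖ ≤
      K * (q : ℝ) ^ C * ((n : ℝ) ^ (C - v.re) * (a : ℝ) ^ (C - u.re)) := by
  obtain ⟨⟨e, rfl⟩, hq⟩ := Nat.mem_divisors.mp hd
  have hd0 : 0 < d := Nat.pos_of_ne_zero (left_ne_zero_of_mul hq)
  have he0 : 0 < e := Nat.pos_of_ne_zero (right_ne_zero_of_mul hq)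
  have hAt' := hAt (n * d) (e * a) (Nat.mul_pos hn hd0) (Nat.mul_pos he0 ha)
  rw [show n * d * (e * a) = n * (d * e) * a by ring, Nat.cast_mul, Nat.cast_mul,
    Real.mul_rpow (by positivity) (by positivity),
    Real.mul_rpow (by positivity) (by positivity)] at hAt'
  have had : ((a * d : ℕ) : ℝ) ^ (-u.re) ≤ (a : ℝ) ^ (-u.re) :=
    Real.rpow_le_rpow_of_nonpos (Nat.cast_pos.mpr ha)
      (by exact_mod_cast Nat.le_mul_of_pos_right a hd0) (neg_nonpos.mpr hu)
  rw [dualTerm, mul_assoc d e a, Nat.mul_div_cancel_left _ hd0, norm_mul, norm_mul, norm_mul,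
    norm_mul, norm_natCast_cpow_neg hn, norm_natCast_cpow_neg (Nat.mul_pos ha hd0),
    ← rpow_mul_rpow_neg (Nat.cast_pos.mpr hn), ← rpow_mul_rpow_neg (Nat.cast_pos.mpr ha)]
  calc ‖At (n * d) (e * a)‖ * ‖ψ _‖ * ‖conjChar χ _‖ * (n : ℝ) ^ (-v.re) *
        ((a * d : ℕ) : ℝ) ^ (-u.re)
      = ‖ψ _‖ * ‖conjChar χ _‖ * (n : ℝ) ^ (-v.re) * ((a * d : ℕ) : ℝ) ^ (-u.re) *
        ‖At (n * d) (e * a)‖ := by ring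
    _ ≤ 1 * 1 * (n : ℝ) ^ (-v.re) * (a : ℝ) ^ (-u.re) *
        (K * ((n : ℝ) ^ C * ((d * e : ℕ) : ℝ) ^ C * (a : ℝ) ^ C)) := by
        gcongr
        exacts [ψ.norm_le_one _, DirichletCharacter.norm_le_one _ _]
    _ = _ := by ring

end Bounds

section Summable

variable {N : ℕ} (ψ : DirichletCharacter ℂ N) {At : ℕ → ℕ → ℂ} (q : ℕ) {cs : ℕ}
  (χ : DirichletCharacter ℂ cs) (u v : ℂ) {K C : ℝ}

lemma summable_norm_aTerm (hAt : IsPolyBounded At K C) (hq : 0 < q) (hv : C + 1 < v.re) :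
    Summable fun n : ℕ+ => ‖aTerm ψ At q v n‖ :=
  .of_nonneg_of_le (fun _ => norm_nonneg _) (norm_aTerm_le ψ q v hAt hq)
    ((summable_pnat_rpow (by linarith)).mul_left _)

lemma summable_norm_twistTerm (hAt : IsPolyBounded At K C) (hu : C + 1 < u.re) :
    Summable fun m : ℕ+ => ‖twistTerm At χ u m‖ :=
  .of_nonneg_of_le (fun _ => norm_nonneg _) (norm_twistTerm_le χ u hAt)
    ((summable_pnat_rpow (by linarith)).mul_left _)

lemma summable_norm_lTerm {z : ℂ} (hz : 1 < z.re) :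
    Summable fun c : ℕ+ => ‖lTerm N χ z c‖ :=
  .of_nonneg_of_le (fun _ => norm_nonneg _) (fun c => norm_lTerm_le χ z c.pos)
    (summable_pnat_rpow (by linarith))

lemma summable_norm_dualTerm (hAt : IsPolyBounded At K C) (hC : 0 ≤ C) (hu : C + 1 < u.re)
    (hv : C + 1 < v.re) :
    Summable fun x : ℕ+ × q.divisors × ℕ+ => ‖dualTerm ψ At q χ u v x.1 x.2.1 x.2.2‖ := by
  have hrpow := fun {σ : ℝ} (hσ : C + 1 < σ) => summable_pnat_rpow (p := C - σ) (by linarith)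
  have hdom := ((hrpow hv).mul_of_nonneg ((Summable.of_finite (f := fun _ : q.divisors =>
    (1 : ℝ))).mul_of_nonneg (hrpow hu) (fun _ => zero_le_one) fun _ => by positivity)
    (fun _ => by positivity) fun _ => by positivity).mul_left (K * (q : ℝ) ^ C)
  refine hdom.of_nonneg_of_le (fun _ => norm_nonneg _) fun ⟨n, d, a⟩ => ?_
  simpa only [one_mul] using
    norm_dualTerm_le ψ q χ u v hAt (by linarith) n.pos d.2 a.pos

end Summable

section Identity

variable {N : ℕ} (ψ : DirichletCharacter ℂ N) {At : ℕ → ℕ → ℂ} (q : ℕ) {cs : ℕ}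
  (χ : DirichletCharacter ℂ cs) (u v : ℂ) {K C : ℝ}

theorem tsum_aTerm_mul_tsum_twistTerm (hHt : SatisfiesHecke (conjChar ψ) At)
    (hAt : IsPolyBounded At K C) (hq : 0 < q) (hC : 0 ≤ C) (hu : C + 1 < u.re)
    (hv : C + 1 < v.re) :
    (∑' n : ℕ+, aTerm ψ At q v n) * ∑' m : ℕ+, twistTerm At χ u m =
      (∑' n : ℕ+, ∑ d ∈ q.divisors, ∑' a : ℕ+, dualTerm ψ At q χ u v n d a) *
        ∑' c : ℕ+, lTerm N (conjChar χ) (u + v) c := by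
  set G : (ℕ+ × ℕ+) × ℕ × ℕ × ℕ → ℂ := fun x => heckeTerm ψ At q χ u v x.1.1 x.1.2 x.2
  set R : ℕ+ × q.divisors × ℕ+ → ℂ := fun x => dualTerm ψ At q χ u v x.1 x.2.1 x.2.2
  have hR := summable_norm_dualTerm ψ q χ u v hAt hC hu hv
  have hL := summable_norm_lTerm (N := N) (conjChar χ) (z := u + v)
    (by rw [Complex.add_re]; linarith)
  have hGR : ∀ x, G (heckeIndex q x) = R x.1 * lTerm N (conjChar χ) (u + v) x.2 :=
    heckeTerm_heckeIndex ψ At q χ u v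
  have hsupp : ∀ x ∉ Set.range (heckeIndex q), G x = 0 :=
    fun _ hx => heckeTerm_eq_zero_of_notMem_range ψ At q χ u v hq hx
  have hG : Summable G := ((heckeIndex_injective q).summable_iff hsupp).mp <| by
    simpa only [Function.comp_def, hGR] using summable_mul_of_summable_norm hR hL
  have hRs : Summable R := hR.of_norm
  have hR_iter :
      ∑' x, R x = ∑' n : ℕ+, ∑ d ∈ q.divisors, ∑' a : ℕ+, dualTerm ψ At q χ u v n d a := by
    rw [hRs.tsum_prod' hRs.prod_factor]
    refine tsum_congr fun n => ?_
    rw [(hRs.prod_factor n).tsum_prod' (hRs.prod_factor n).prod_factor,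
      Finset.tsum_subtype q.divisors fun d => ∑' a : ℕ+, dualTerm ψ At q χ u v n d a]
  calc (∑' n : ℕ+, aTerm ψ At q v n) * ∑' m : ℕ+, twistTerm At χ u m
      = ∑' p : ℕ+ × ℕ+, aTerm ψ At q v p.1 * twistTerm At χ u p.2 :=
        tsum_mul_tsum_of_summable_norm (summable_norm_aTerm ψ q v hAt hq hv)
          (summable_norm_twistTerm χ u hAt hu)
    _ = ∑' p : ℕ+ × ℕ+, ∑' t, G (p, t) :=
        tsum_congr fun p => aTerm_mul_twistTerm ψ At q χ u v hHt hq p.1.pos p.2.pos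
    _ = ∑' x, G x := (hG.tsum_prod' hG.prod_factor).symm
    _ = ∑' y, G (heckeIndex q y) :=
        ((heckeIndex_injective q).tsum_eq (Function.support_subset_iff'.mpr hsupp)).symm
    _ = (∑' x, R x) * ∑' c : ℕ+, lTerm N (conjChar χ) (u + v) c := by
        rw [tsum_mul_tsum_of_summable_norm hR hL]
        exact tsum_congr hGR
    _ = _ := by rw [hR_iter]

end Identity

lemma LN_eq_tsum_lTerm (N : ℕ) {cs : ℕ} (χ : DirichletCharacter ℂ cs) (z : ℂ) :
    LN N χ z = ∑' c : ℕ+, lTerm N χ z c :=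
  (tsum_pnat_eq_tsum_succ (f := lTerm N χ z)).symm

lemma LN_ne_zero (N : ℕ) {cs : ℕ} (χ : DirichletCharacter ℂ cs) {z : ℂ} (hz : 2 ≤ z.re) :
    LN N χ z ≠ 0 := by
  refine tsum_succ_ne_zero_of_norm_le (f := lTerm N χ z) (by simp [lTerm]) fun n => ?_
  have h2 : (1 : ℝ) ≤ (n : ℝ) + 2 := by linarith [n.cast_nonneg (α := ℝ)]
  calc ‖lTerm N χ z (n + 2)‖ ≤ ((n : ℝ) + 2) ^ (-z.re) := by
        exact_mod_cast norm_lTerm_le χ z (Nat.succ_pos (n + 1))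
    _ ≤ ((n : ℝ) + 2) ^ (-2 : ℝ) := Real.rpow_le_rpow_of_exponent_le h2 (by linarith)
    _ = 1 / ((n : ℝ) + 2) ^ 2 := by rw [Real.rpow_neg (by linarith), one_div]; norm_cast

section Shapes

variable {N : ℕ} (ψ : DirichletCharacter ℂ N) {A At : ℕ → ℕ → ℂ} {q : ℕ} {cs : ℕ}
  (χ : DirichletCharacter ℂ cs) (u v : ℂ)

lemma tsum_coprime_A_eq_tsum_aTerm (hq : 0 < q) (hqN : q.Coprime N)
    (hAAt : ∀ n q' : ℕ, 0 < n → 0 < q' → Nat.Coprime (n * q') N →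
      A q' n = ψ ((n * q' : ℕ) : ZMod N) * At n q') :
    (∑' n : ℕ, if Nat.Coprime (n + 1) N then A q (n + 1) * ((n + 1 : ℕ) : ℂ) ^ (-v) else 0) =
      ∑' n : ℕ+, aTerm ψ At q v n := by
  rw [tsum_pnat_eq_tsum_succ]
  refine tsum_congr fun n => ?_
  split_ifs with hn
  · rw [hAAt _ _ n.succ_pos hq (Nat.Coprime.mul_left hn hqN), aTerm]
  · rw [aTerm, ψ.apply_natCast_eq_zero_of_not_coprime fun h => hn (Nat.coprime_mul_iff_left.mp h).1]
    ring

lemma tsum_dual_eq_tsum_dualTerm :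
    (∑' n : ℕ, if Nat.Coprime (n + 1) N then
        ∑ d₁ ∈ q.divisors, ∑' d₀ : ℕ,
          At ((n + 1) * d₁) (q * (d₀ + 1) / d₁) * ψ (((n + 1) * q : ℕ) : ZMod N) *
            conjChar χ (((d₀ + 1) * d₁ : ℕ) : ZMod cs) *
            ((n + 1 : ℕ) : ℂ) ^ (-v) * (((d₀ + 1) * d₁ : ℕ) : ℂ) ^ (-u)
      else 0) =
      ∑' n : ℕ+, ∑ d ∈ q.divisors, ∑' a : ℕ+, dualTerm ψ At q χ u v n d a := by
  rw [tsum_pnat_eq_tsum_succ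
    (f := fun n => ∑ d ∈ q.divisors, ∑' a : ℕ+, dualTerm ψ At q χ u v n d a)]
  refine tsum_congr fun n => ?_
  simp only [tsum_pnat_eq_tsum_succ (f := dualTerm ψ At q χ u v (n + 1) _)]
  refine ite_eq_left_iff.mpr fun hn => (Finset.sum_eq_zero fun d _ => ?_).symm
  simp only [ψ.apply_natCast_eq_zero_of_not_coprime fun h => hn (Nat.coprime_mul_iff_left.mp h).1,
    mul_zero, zero_mul, tsum_zero]

end Shapes

end DoubleDirichlet

open DoubleDirichlet

theorem statement_6_general (N : ℕ) (ψ : DirichletCharacter ℂ N)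
    (A At : ℕ → ℕ → ℂ) (α β γ ε : ℂ)
    (hbd : ∃ C : ℝ, 0 < C ∧ ∃ K : ℝ, ∀ m n : ℕ, 0 < m → 0 < n →
      ‖A m n‖ + ‖At m n‖ ≤ K * ((m * n : ℕ) : ℝ) ^ C)
    -- Hecke relation for `Ã`
    (hHt : ∀ m n₁ n₂ : ℕ, 0 < m → 0 < n₁ → 0 < n₂ → Nat.Coprime (n₁ * n₂) N →
      At 1 m * At n₂ n₁ = heckeRHS2 (conjChar ψ) At m n₁ n₂)
    -- `A(q,n) = ψ(nq) Ã(n,q)` for `(nq,N)=1`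
    (hAAt : ∀ n q' : ℕ, 0 < n → 0 < q' → Nat.Coprime (n * q') N →
      A q' n = ψ ((n * q' : ℕ) : ZMod N) * At n q')
    -- twisted functional-equation hypothesis, in force for all primitive characters
    (hFE : ∀ cs : ℕ, 0 < cs → ∀ χ : DirichletCharacter ℂ cs, χ.IsPrimitive →
      Nat.Coprime cs N →
      ∃ L₁ L₂ : ℂ → ℂ, Differentiable ℂ L₁ ∧ Differentiable ℂ L₂ ∧
        (∃ T : ℝ, ∀ s : ℂ, T < s.re →
          Summable (fun n : ℕ =>
            A 1 (n + 1) * χ ((n + 1 : ℕ) : ZMod cs) * ((n + 1 : ℕ) : ℂ) ^ (-s)) ∧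
          L₁ s = ∑' n : ℕ,
            A 1 (n + 1) * χ ((n + 1 : ℕ) : ZMod cs) * ((n + 1 : ℕ) : ℂ) ^ (-s)) ∧
        (∃ T : ℝ, ∀ s : ℂ, T < s.re →
          Summable (fun n : ℕ =>
            At 1 (n + 1) * conjChar χ ((n + 1 : ℕ) : ZMod cs) * ((n + 1 : ℕ) : ℂ) ^ (-s)) ∧
          L₂ s = ∑' n : ℕ,
            At 1 (n + 1) * conjChar χ ((n + 1 : ℕ) : ZMod cs) * ((n + 1 : ℕ) : ℂ) ^ (-s)) ∧
        (∀ s : ℂ, L₁ s = Gpm N ψ ε α β γ χ s * ψ ((cs : ℕ) : ZMod N) *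
          χ ((N : ℕ) : ZMod cs) * (cs : ℂ) ^ (-(3 * s)) * tau χ ^ 3 * L₂ (1 - s)))
    (q : ℕ) (hq : 0 < q) (hqN : Nat.Coprime q N)
    (cs : ℕ) (hcs : 0 < cs) (χ : DirichletCharacter ℂ cs) (hprim : χ.IsPrimitive)
    (hcsN : Nat.Coprime cs N)
    -- `L₁` is the holomorphic continuation of `L(s,F×χ*)`
    (L₁ : ℂ → ℂ) (hL₁ : Differentiable ℂ L₁)
    (hL₁ser : ∃ T : ℝ, ∀ s : ℂ, T < s.re →
      Summable (fun n : ℕ =>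
        A 1 (n + 1) * χ ((n + 1 : ℕ) : ZMod cs) * ((n + 1 : ℕ) : ℂ) ^ (-s)) ∧
      L₁ s = ∑' n : ℕ,
        A 1 (n + 1) * χ ((n + 1 : ℕ) : ZMod cs) * ((n + 1 : ℕ) : ℂ) ^ (-s)) :
    ∃ T₂ : ℝ, ∀ w : ℂ, T₂ < w.re → ∃ T₁ : ℝ, ∀ s : ℂ, s.re < T₁ →
      (∑' n : ℕ, if Nat.Coprime (n + 1) N then
          A q (n + 1) * ((n + 1 : ℕ) : ℂ) ^ (-(2 * w - s)) else 0) * L₁ s /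
        LN N (conjChar χ) (2 * w - 2 * s + 1)
      = Gpm N ψ ε α β γ χ s * ψ ((cs : ℕ) : ZMod N) * χ ((N : ℕ) : ZMod cs) *
          (cs : ℂ) ^ (-(3 * s)) * tau χ ^ 3 *
          ∑' n : ℕ, if Nat.Coprime (n + 1) N then
            ∑ d₁ ∈ q.divisors, ∑' d₀ : ℕ,
              At ((n + 1) * d₁) (q * (d₀ + 1) / d₁) * ψ (((n + 1) * q : ℕ) : ZMod N) *
                conjChar χ (((d₀ + 1) * d₁ : ℕ) : ZMod cs) *
                ((n + 1 : ℕ) : ℂ) ^ (-(2 * w - s)) *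
                (((d₀ + 1) * d₁ : ℕ) : ℂ) ^ (-(1 - s))
          else 0 := by
  obtain ⟨C, hC, K, hbd⟩ := hbd
  have hAt : IsPolyBounded At K C := fun m n hm hn =>
    (le_add_of_nonneg_left (norm_nonneg _)).trans (hbd m n hm hn)
  obtain ⟨L₁', L₂, hL₁', -, ⟨T, hL₁'ser⟩, ⟨T', hL₂ser⟩, hfe⟩ := hFE cs hcs χ hprim hcsN
  obtain ⟨T'', hL₁ser⟩ := hL₁ser
  have hL₁eq : L₁ = L₁' := eq_of_eq_on_re_gt hL₁ hL₁' (T := max T'' T) fun s hs =>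
    (hL₁ser s (max_lt_iff.mp hs).1).2.trans (hL₁'ser s (max_lt_iff.mp hs).2).2.symm
  refine ⟨0, fun w _ => ⟨min (-T') (min (-C) (2 * w.re - C - 1)), fun s hs => ?_⟩⟩
  simp only [lt_min_iff] at hs
  have hu : C + 1 < (1 - s).re := by simp only [sub_re, one_re]; linarith
  have hv : C + 1 < (2 * w - s).re := by
    simp only [sub_re, mul_re, re_ofNat, im_ofNat, zero_mul, sub_zero]
    linarith
  have huv : (1 - s) + (2 * w - s) = 2 * w - 2 * s + 1 := by ring
  have hne := LN_ne_zero N (conjChar χ) (z := 2 * w - 2 * s + 1)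
    (by rw [← huv, Complex.add_re]; linarith)
  have key := tsum_aTerm_mul_tsum_twistTerm ψ q χ (1 - s) (2 * w - s) hHt hAt hq hC.le hu hv
  rw [← tsum_coprime_A_eq_tsum_aTerm ψ (2 * w - s) hq hqN hAAt,
    ← tsum_dual_eq_tsum_dualTerm, ← LN_eq_tsum_lTerm, huv, tsum_pnat_eq_tsum_succ] at key
  simp only [twistTerm] at key
  rw [hL₁eq, hfe, (hL₂ser (1 - s) (by simp only [sub_re, one_re]; linarith)).2, div_eq_iff hne]
  linear_combination (Gpm N ψ ε α β γ χ s * ψ ((cs : ℕ) : ZMod N) * χ ((N : ℕ) : ZMod cs) *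
    (cs : ℂ) ^ (-(3 * s)) * tau χ ^ 3) * key

/-- the double Dirichlet series
`Z(s,w) = L_q^{(N)}(2w-s,F) · L(s,F×χ*) / L^{(N)}(2w-2s+1, conj χ*)` satisfies, for `Re w`
sufficiently large and `-Re s` sufficiently large,
`Z(s,w) = G_±(s) ψ(c*) χ*(N) c*^{-3s} τ(χ*)³
   ∑_{(n,N)=1} ∑_{d₁∣q} ∑_{d₀≥1} Ã(nd₁, qd₀/d₁) ψ(nq) conj(χ*)(d₀d₁)
     n^{-(2w-s)} (d₀d₁)^{-(1-s)}`. -/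
theorem statement_6 (N : ℕ) (hN : 0 < N) (ψ : DirichletCharacter ℂ N)
    (A At : ℕ → ℕ → ℂ) (α β γ ε : ℂ) (hαβγ : α + β + γ = 0) (hε : ‖ε‖ = 1)
    (hbd : ∃ C : ℝ, 0 < C ∧ ∃ K : ℝ, ∀ m n : ℕ, 0 < m → 0 < n →
      ‖A m n‖ + ‖At m n‖ ≤ K * ((m * n : ℕ) : ℝ) ^ C)
    -- Hecke relation for `Ã`
    (hHt : ∀ m n₁ n₂ : ℕ, 0 < m → 0 < n₁ → 0 < n₂ → Nat.Coprime (n₁ * n₂) N →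
      At 1 m * At n₂ n₁ = heckeRHS2 (conjChar ψ) At m n₁ n₂)
    -- `A(q,n) = ψ(nq) Ã(n,q)` for `(nq,N)=1`
    (hAAt : ∀ n q' : ℕ, 0 < n → 0 < q' → Nat.Coprime (n * q') N →
      A q' n = ψ ((n * q' : ℕ) : ZMod N) * At n q')
    -- twisted functional-equation hypothesis, in force for all primitive characters
    (hFE : ∀ cs : ℕ, 0 < cs → ∀ χ : DirichletCharacter ℂ cs, χ.IsPrimitive →
      Nat.Coprime cs N →
      ∃ L₁ L₂ : ℂ → ℂ, Differentiable ℂ L₁ ∧ Differentiable ℂ L₂ ∧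
        (∃ T : ℝ, ∀ s : ℂ, T < s.re →
          Summable (fun n : ℕ =>
            A 1 (n + 1) * χ ((n + 1 : ℕ) : ZMod cs) * ((n + 1 : ℕ) : ℂ) ^ (-s)) ∧
          L₁ s = ∑' n : ℕ,
            A 1 (n + 1) * χ ((n + 1 : ℕ) : ZMod cs) * ((n + 1 : ℕ) : ℂ) ^ (-s)) ∧
        (∃ T : ℝ, ∀ s : ℂ, T < s.re →
          Summable (fun n : ℕ =>
            At 1 (n + 1) * conjChar χ ((n + 1 : ℕ) : ZMod cs) * ((n + 1 : ℕ) : ℂ) ^ (-s)) ∧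
          L₂ s = ∑' n : ℕ,
            At 1 (n + 1) * conjChar χ ((n + 1 : ℕ) : ZMod cs) * ((n + 1 : ℕ) : ℂ) ^ (-s)) ∧
        (∀ s : ℂ, L₁ s = Gpm N ψ ε α β γ χ s * ψ ((cs : ℕ) : ZMod N) *
          χ ((N : ℕ) : ZMod cs) * (cs : ℂ) ^ (-(3 * s)) * tau χ ^ 3 * L₂ (1 - s)))
    (q : ℕ) (hq : 0 < q) (hqN : Nat.Coprime q N)
    (cs : ℕ) (hcs : 0 < cs) (χ : DirichletCharacter ℂ cs) (hprim : χ.IsPrimitive)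
    (hcsN : Nat.Coprime cs N)
    -- `L₁` is the holomorphic continuation of `L(s,F×χ*)`
    (L₁ : ℂ → ℂ) (hL₁ : Differentiable ℂ L₁)
    (hL₁ser : ∃ T : ℝ, ∀ s : ℂ, T < s.re →
      Summable (fun n : ℕ =>
        A 1 (n + 1) * χ ((n + 1 : ℕ) : ZMod cs) * ((n + 1 : ℕ) : ℂ) ^ (-s)) ∧
      L₁ s = ∑' n : ℕ,
        A 1 (n + 1) * χ ((n + 1 : ℕ) : ZMod cs) * ((n + 1 : ℕ) : ℂ) ^ (-s)) :
    ∃ T₂ : ℝ, ∀ w : ℂ, T₂ < w.re → ∃ T₁ : ℝ, ∀ s : ℂ, s.re < T₁ →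
      (∑' n : ℕ, if Nat.Coprime (n + 1) N then
          A q (n + 1) * ((n + 1 : ℕ) : ℂ) ^ (-(2 * w - s)) else 0) * L₁ s /
        LN N (conjChar χ) (2 * w - 2 * s + 1)
      = Gpm N ψ ε α β γ χ s * ψ ((cs : ℕ) : ZMod N) * χ ((N : ℕ) : ZMod cs) *
          (cs : ℂ) ^ (-(3 * s)) * tau χ ^ 3 *
          ∑' n : ℕ, if Nat.Coprime (n + 1) N then
            ∑ d₁ ∈ q.divisors, ∑' d₀ : ℕ,
              At ((n + 1) * d₁) (q * (d₀ + 1) / d₁) * ψ (((n + 1) * q : ℕ) : ZMod N) *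
                conjChar χ (((d₀ + 1) * d₁ : ℕ) : ZMod cs) *
                ((n + 1 : ℕ) : ℂ) ^ (-(2 * w - s)) *
                (((d₀ + 1) * d₁ : ℕ) : ℂ) ^ (-(1 - s))
          else 0 :=
  statement_6_general N ψ A At α β γ ε hbd hHt hAAt hFE q hq hqN cs hcs χ hprim hcsN L₁ hL₁ hL₁ser

end
end

section
/- Let N be a positive integer, ψ a Dirichlet character modulo N, and A : ℤ_{>0} × ℤ_{>0} → ℂ with A(1,1) = 1 and |A(m,n)| = O((mn)^C) for some C > 0. Assume the two Hecke relations: for all n with (n,N)=1 and all positive integers n₁, n₂, A(n,1)·A(n₂,n₁) = ∑_{abc=n, a|n₁, b|n₂} ψ(ab)·A(cn₂/b, bn₁/a) and A(1,n)·A(n₂,n₁) = ∑_{abc=n, b|n₁, c|n₂} ψ(c)·A(bn₂/c, an₁/b). Then for any Dirichlet character χ and Re(s) sufficiently large, the Dirichlet series has the Euler product ∑_{n≥1, (n,N)=1} A(1,n)·χ(n)·n^{−s} = ∏_{p prime, p ∤ N} (1 − A(1,p)χ(p)p^{−s} + A(p,1)χ(p)²p^{−2s} − χ(p)³ψ(p)p^{−3s})^{−1}.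 -/
/-!
Relation (2) with `n₂ = 1` makes `n ↦ A(1,n)` multiplicative on integers prime to `N`, and
the two relations at a prime `p ∤ N` with `n₁ = p^k` give, after eliminating `A(p, p^{k+1})`,
the recurrence `A(1,p^{k+3}) = A(1,p) A(1,p^{k+2}) - A(p,1) A(1,p^{k+1}) + ψ(p) A(1,p^k)`.
The polynomial bound on `A` makes the series absolutely convergent, so the Euler product for
multiplicative functions applies, and the recurrence says that the local factor
`∑ₖ A(1,p^k) Xᵏ`, `X = χ(p) p^{-s}`, is the inverse of `1 - A(1,p) X + A(p,1) X² - ψ(p) X³`.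
-/

open Complex
open scoped Classical

noncomputable section

open Finset

theorem tsum_mul_cubic_eq_one_of_recurrence {R : Type*} [CommRing R] [TopologicalSpace R]
    [IsTopologicalRing R] [T2Space R] {t : ℕ → R} {a b c X : R}
    (h0 : t 0 = 1) (h1 : t 1 = a) (h2 : t 2 = a * t 1 - b * t 0)
    (hrec : ∀ k, t (k + 3) = a * t (k + 2) - b * t (k + 1) + c * t k)
    (hsum : Summable fun k => t k * X ^ k) :
    (∑' k, t k * X ^ k) * (1 - a * X + b * X ^ 2 - c * X ^ 3) = 1 := by
  set u : ℕ → R := fun k => t k * X ^ k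
  have hsum' (j : ℕ) : Summable fun k => u (k + j) := (summable_nat_add_iff j).mpr hsum
  have e0 : ∑' k, u k = u 0 + ∑' k, u (k + 1) := hsum.tsum_eq_zero_add
  have e1 : ∑' k, u (k + 1) = u 1 + ∑' k, u (k + 2) := (hsum' 1).tsum_eq_zero_add
  have e2 : ∑' k, u (k + 2) = u 2 + ∑' k, u (k + 3) := (hsum' 2).tsum_eq_zero_add
  have e3 : ∑' k, u (k + 3) =
      a * X * ∑' k, u (k + 2) - b * X ^ 2 * ∑' k, u (k + 1) + c * X ^ 3 * ∑' k, u k := by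
    rw [← (hsum' 2).tsum_mul_left, ← (hsum' 1).tsum_mul_left, ← hsum.tsum_mul_left,
      ← ((hsum' 2).mul_left _).tsum_sub ((hsum' 1).mul_left _),
      ← (((hsum' 2).mul_left _).sub ((hsum' 1).mul_left _)).tsum_add (hsum.mul_left _)]
    refine tsum_congr fun k => ?_
    simp only [u, hrec]
    ring
  have hu0 : u 0 = 1 := by simp [u, h0]
  have hu1 : u 1 = a * X := by simp [u, h1]
  have hu2 : u 2 = (a ^ 2 - b) * X ^ 2 := by simp only [u, h2, h1, h0]; ring
  rw [hu0] at e0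
  rw [hu1] at e1
  rw [hu2] at e2
  linear_combination (1 - a * X + b * X ^ 2) * e0 + (1 - a * X) * e1 + e2 + e3

theorem filter_triple_mul_eq_prime {p : ℕ} (hp : p.Prime) :
    (range (p + 1) ×ˢ range (p + 1) ×ˢ range (p + 1)).filter
        (fun t => t.1 * (t.2.1 * t.2.2) = p) = {(p, 1, 1), (1, p, 1), (1, 1, p)} := by
  have := hp.one_lt
  ext ⟨a, b, c⟩
  simp only [mem_filter, mem_product, mem_range, mem_insert, mem_singleton, Prod.mk.injEq]
  constructor
  · rintro ⟨-, habc⟩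
    rcases Nat.prime_mul_iff.mp (habc ▸ hp) with ⟨-, hbc⟩ | ⟨hbc, rfl⟩
    · obtain ⟨rfl, rfl⟩ := mul_eq_one.mp hbc
      simp_all
    · rcases Nat.prime_mul_iff.mp hbc with ⟨-, rfl⟩ | ⟨-, rfl⟩ <;> simp_all
  · rintro (⟨rfl, rfl, rfl⟩ | ⟨rfl, rfl, rfl⟩ | ⟨rfl, rfl, rfl⟩) <;> simp <;> omega

theorem heckeRHS2_one_of_coprime {M : ℕ} (ψ : DirichletCharacter ℂ M) (A : ℕ → ℕ → ℂ)
    {m n : ℕ} (hm : 0 < m) (hmn : m.Coprime n) :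
    heckeRHS2 ψ A m n 1 = A 1 (m * n) := by
  rw [heckeRHS2, sum_eq_single (m, 1, 1)]
  · simp
  · rintro ⟨a, b, c⟩ h hne
    simp only [mem_filter, Nat.dvd_one] at h
    obtain ⟨-, habc, hbn, rfl⟩ := h
    have hb : b = 1 := Nat.eq_one_of_dvd_coprimes hmn ⟨a, by rw [← habc]; ring⟩ hbn
    subst hb
    simp_all
  · intro hmem
    simp at hmem
    omega

theorem heckeRHS2_prime_pow_one {M : ℕ} (ψ : DirichletCharacter ℂ M) (A : ℕ → ℕ → ℂ)
    {p : ℕ} (hp : p.Prime) (k : ℕ) :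
    heckeRHS2 ψ A p (p ^ (k + 1)) 1 = A 1 (p ^ (k + 2)) + A p (p ^ k) := by
  rw [heckeRHS2, ← filter_filter, filter_triple_mul_eq_prime hp, sum_filter]
  have := hp.one_lt
  rw [sum_insert (by simp; omega), sum_insert (by simp; omega), sum_singleton]
  simp [hp.ne_one, hp.pos, pow_succ']

theorem heckeRHS1_prime_pow_one {M : ℕ} (ψ : DirichletCharacter ℂ M) (A : ℕ → ℕ → ℂ)
    {p : ℕ} (hp : p.Prime) (k : ℕ) :
    heckeRHS1 ψ A p (p ^ (k + 1)) 1 = A p (p ^ (k + 1)) + ψ p * A 1 (p ^ k) := by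
  rw [heckeRHS1, ← filter_filter, filter_triple_mul_eq_prime hp, sum_filter]
  have := hp.one_lt
  rw [sum_insert (by simp; omega), sum_insert (by simp; omega), sum_singleton]
  simp [hp.ne_one, hp.pos, pow_succ']
  ring

def HeckeRelation1 {N : ℕ} (ψ : DirichletCharacter ℂ N) (A : ℕ → ℕ → ℂ) : Prop :=
  ∀ n n₁ n₂ : ℕ, 0 < n → 0 < n₁ → 0 < n₂ → n.Coprime N →
    A n 1 * A n₂ n₁ = heckeRHS1 ψ A n n₁ n₂

def HeckeRelation2 {N : ℕ} (ψ : DirichletCharacter ℂ N) (A : ℕ → ℕ → ℂ) : Prop :=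
  ∀ n n₁ n₂ : ℕ, 0 < n → 0 < n₁ → 0 < n₂ → n.Coprime N →
    A 1 n * A n₂ n₁ = heckeRHS2 ψ A n n₁ n₂

section HeckeRelations

variable {N : ℕ} {ψ : DirichletCharacter ℂ N} {A : ℕ → ℕ → ℂ}

theorem HeckeRelation2.mul_of_coprime (hH2 : HeckeRelation2 ψ A) {m n : ℕ} (hm : 0 < m)
    (hn : 0 < n) (hmn : m.Coprime n) (hmN : m.Coprime N) :
    A 1 (m * n) = A 1 m * A 1 n := by
  rw [hH2 m n 1 hm hn one_pos hmN, heckeRHS2_one_of_coprime ψ A hm hmn]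

theorem HeckeRelation2.prime_sq (hH2 : HeckeRelation2 ψ A) {p : ℕ} (hp : p.Prime)
    (hpN : p.Coprime N) :
    A 1 (p ^ 2) = A 1 p * A 1 p - A p 1 := by
  have h := hH2 p (p ^ 1) 1 hp.pos (pow_pos hp.pos 1) one_pos hpN
  rw [heckeRHS2_prime_pow_one ψ A hp 0] at h
  simp only [pow_one, pow_zero] at h
  linear_combination -h

theorem HeckeRelation2.prime_pow_add_three (hH2 : HeckeRelation2 ψ A)
    (hH1 : HeckeRelation1 ψ A) {p : ℕ} (hp : p.Prime) (hpN : p.Coprime N) (k : ℕ) :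
    A 1 (p ^ (k + 3)) =
      A 1 p * A 1 (p ^ (k + 2)) - A p 1 * A 1 (p ^ (k + 1)) + ψ p * A 1 (p ^ k) := by
  have h1 := hH1 p (p ^ (k + 1)) 1 hp.pos (pow_pos hp.pos _) one_pos hpN
  have h2 := hH2 p (p ^ (k + 2)) 1 hp.pos (pow_pos hp.pos _) one_pos hpN
  rw [heckeRHS1_prime_pow_one ψ A hp k] at h1
  rw [heckeRHS2_prime_pow_one ψ A hp (k + 1)] at h2
  linear_combination h1 - h2

end HeckeRelations

theorem LSeries.term_mul_of_map_mul {a : ℕ → ℂ} (s : ℂ) {m n : ℕ}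
    (h : m ≠ 0 → n ≠ 0 → a (m * n) = a m * a n) :
    LSeries.term a s (m * n) = LSeries.term a s m * LSeries.term a s n := by
  rcases eq_or_ne m 0 with rfl | hm
  · simp
  rcases eq_or_ne n 0 with rfl | hn
  · simp
  simp only [LSeries.term_of_ne_zero (mul_ne_zero hm hn), LSeries.term_of_ne_zero hm,
    LSeries.term_of_ne_zero hn, h hm hn, Nat.cast_mul, natCast_mul_natCast_cpow, mul_div_mul_comm]

def twistedCoeff (N : ℕ) {M : ℕ} (A : ℕ → ℕ → ℂ) (χ : DirichletCharacter ℂ M) (n : ℕ) : ℂ :=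
  if n.Coprime N then A 1 n * χ n else 0

section TwistedCoeff

variable {N M : ℕ} {ψ : DirichletCharacter ℂ N} {A : ℕ → ℕ → ℂ} {χ : DirichletCharacter ℂ M}

theorem HeckeRelation2.twistedCoeff_mul (hH2 : HeckeRelation2 ψ A) {m n : ℕ} (hm : m ≠ 0)
    (hn : n ≠ 0) (hmn : m.Coprime n) :
    twistedCoeff N A χ (m * n) = twistedCoeff N A χ m * twistedCoeff N A χ n := by
  simp only [twistedCoeff, Nat.coprime_mul_iff_left]
  by_cases hmN : m.Coprime N
  · by_cases hnN : n.Coprime N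
    · rw [if_pos ⟨hmN, hnN⟩, if_pos hmN, if_pos hnN,
        hH2.mul_of_coprime (Nat.pos_of_ne_zero hm) (Nat.pos_of_ne_zero hn) hmn hmN,
        Nat.cast_mul, map_mul]
      ring
    · simp [hnN]
  · simp [hmN]

theorem norm_twistedCoeff_le (n : ℕ) : ‖twistedCoeff N A χ n‖ ≤ ‖A 1 n‖ := by
  unfold twistedCoeff
  split_ifs
  · simpa using mul_le_of_le_one_right (norm_nonneg _) (χ.norm_le_one n)
  · simp

theorem lSeriesSummable_twistedCoeff {C K : ℝ} (hA : ∀ n ≠ 0, ‖A 1 n‖ ≤ K * (n : ℝ) ^ C)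
    {s : ℂ} (hs : C + 1 < s.re) : LSeriesSummable (twistedCoeff N A χ) s :=
  LSeriesSummable_of_le_const_mul_rpow hs
    ⟨K, fun n hn => by simpa using (norm_twistedCoeff_le n).trans (hA n hn)⟩

theorem term_twistedCoeff_succ (s : ℂ) (n : ℕ) :
    LSeries.term (twistedCoeff N A χ) s (n + 1) = if (n + 1).Coprime N then
      A 1 (n + 1) * χ ((n + 1 : ℕ) : ZMod M) * ((n + 1 : ℕ) : ℂ) ^ (-s) else 0 := by
  rw [LSeries.term_of_ne_zero n.succ_ne_zero, twistedCoeff]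
  split_ifs <;> simp [cpow_neg, div_eq_mul_inv]

theorem term_twistedCoeff_prime_pow {p : ℕ} (hp : p.Prime) (hpN : p.Coprime N) (s : ℂ)
    (e : ℕ) : LSeries.term (twistedCoeff N A χ) s (p ^ e) =
      A 1 (p ^ e) * (χ p * (p : ℂ) ^ (-s)) ^ e := by
  rw [LSeries.term_of_ne_zero (pow_ne_zero e hp.ne_zero), twistedCoeff,
    if_pos (hpN.pow_left e), Nat.cast_pow, map_pow, div_eq_mul_inv, ← cpow_neg,
    Nat.cast_pow, ← natCast_cpow_natCast_mul, cpow_nat_mul]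
  ring

theorem term_twistedCoeff_prime_pow_succ_of_dvd {p : ℕ} (hp : p.Prime) (hpN : p ∣ N) (s : ℂ)
    (e : ℕ) : LSeries.term (twistedCoeff N A χ) s (p ^ (e + 1)) = 0 := by
  have : ¬ (p ^ (e + 1)).Coprime N := fun h =>
    hp.ne_one (Nat.eq_one_of_dvd_coprimes h (dvd_pow_self p e.succ_ne_zero) hpN)
  simp [LSeries.term, twistedCoeff, this]

end TwistedCoeff

theorem tsum_term_twistedCoeff_prime_pow {N M : ℕ} {ψ : DirichletCharacter ℂ N}
    {A : ℕ → ℕ → ℂ} {χ : DirichletCharacter ℂ M} (hA11 : A 1 1 = 1)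
    (hH1 : HeckeRelation1 ψ A) (hH2 : HeckeRelation2 ψ A) {s : ℂ}
    (hsum : LSeriesSummable (twistedCoeff N A χ) s) (p : Nat.Primes) :
    ∑' e, LSeries.term (twistedCoeff N A χ) s ((p : ℕ) ^ e) = if ¬ ((p : ℕ) ∣ N) then
      (1 - A 1 (p : ℕ) * χ ((p : ℕ) : ZMod M) * ((p : ℕ) : ℂ) ^ (-s)
        + A (p : ℕ) 1 * χ ((p : ℕ) : ZMod M) ^ 2 * ((p : ℕ) : ℂ) ^ (-(2 * s))
        - χ ((p : ℕ) : ZMod M) ^ 3 * ψ ((p : ℕ) : ZMod N) * ((p : ℕ) : ℂ) ^ (-(3 * s)))⁻¹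
      else 1 := by
  obtain ⟨p, hp⟩ := p
  dsimp only
  by_cases hpN : p ∣ N
  · rw [if_neg (not_not.mpr hpN), tsum_eq_single 0 fun e he => ?_]
    · simp [LSeries.term, twistedCoeff, hA11]
    · obtain ⟨e, rfl⟩ := Nat.exists_eq_succ_of_ne_zero he
      exact term_twistedCoeff_prime_pow_succ_of_dvd hp hpN s e
  rw [if_pos hpN]
  replace hpN : p.Coprime N := (Nat.Prime.coprime_iff_not_dvd hp).mpr hpN
  set X := χ p * (p : ℂ) ^ (-s)
  have hcubic : 1 - A 1 p * χ p * (p : ℂ) ^ (-s) + A p 1 * χ p ^ 2 * (p : ℂ) ^ (-(2 * s))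
      - χ p ^ 3 * ψ p * (p : ℂ) ^ (-(3 * s)) = 1 - A 1 p * X + A p 1 * X ^ 2 - ψ p * X ^ 3 := by
    rw [show -(2 * s) = (2 : ℕ) * -s by push_cast; ring,
      show -(3 * s) = (3 : ℕ) * -s by push_cast; ring, cpow_nat_mul, cpow_nat_mul]
    ring
  have hterm := term_twistedCoeff_prime_pow (A := A) (χ := χ) hp hpN s
  rw [tsum_congr hterm, hcubic]
  refine eq_inv_of_mul_eq_one_left (tsum_mul_cubic_eq_one_of_recurrence ?_ ?_ ?_
    (hH2.prime_pow_add_three hH1 hp hpN) ?_)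
  · rw [pow_zero, hA11]
  · rw [pow_one]
  · rw [hH2.prime_sq hp hpN, pow_one, pow_zero, hA11]
    ring
  · simp_rw [← hterm]
    exact hsum.comp_injective (Nat.pow_right_injective hp.two_le)

theorem statement_8_general (N M : ℕ) (ψ : DirichletCharacter ℂ N)
    (A : ℕ → ℕ → ℂ) (hA11 : A 1 1 = 1)
    (hbd : ∃ C : ℝ, 0 < C ∧ ∃ K : ℝ, ∀ m n : ℕ, 0 < m → 0 < n →
      ‖A m n‖ ≤ K * ((m * n : ℕ) : ℝ) ^ C)
    (hH1 : ∀ n n₁ n₂ : ℕ, 0 < n → 0 < n₁ → 0 < n₂ → Nat.Coprime n N →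
      A n 1 * A n₂ n₁ = heckeRHS1 ψ A n n₁ n₂)
    (hH2 : ∀ n n₁ n₂ : ℕ, 0 < n → 0 < n₁ → 0 < n₂ → Nat.Coprime n N →
      A 1 n * A n₂ n₁ = heckeRHS2 ψ A n n₁ n₂)
    (χ : DirichletCharacter ℂ M) :
    ∃ T : ℝ, ∀ s : ℂ, T < s.re →
      Summable (fun n : ℕ => if Nat.Coprime (n + 1) N then
        A 1 (n + 1) * χ ((n + 1 : ℕ) : ZMod M) * ((n + 1 : ℕ) : ℂ) ^ (-s) else 0) ∧
      Multipliable (fun p : Nat.Primes => if ¬ ((p : ℕ) ∣ N) then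
        (1 - A 1 (p : ℕ) * χ ((p : ℕ) : ZMod M) * ((p : ℕ) : ℂ) ^ (-s)
           + A (p : ℕ) 1 * χ ((p : ℕ) : ZMod M) ^ 2 * ((p : ℕ) : ℂ) ^ (-(2 * s))
           - χ ((p : ℕ) : ZMod M) ^ 3 * ψ ((p : ℕ) : ZMod N) * ((p : ℕ) : ℂ) ^ (-(3 * s)))⁻¹
        else 1) ∧
      (∑' n : ℕ, if Nat.Coprime (n + 1) N then
          A 1 (n + 1) * χ ((n + 1 : ℕ) : ZMod M) * ((n + 1 : ℕ) : ℂ) ^ (-s) else 0)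
        = ∏' p : Nat.Primes, if ¬ ((p : ℕ) ∣ N) then
            (1 - A 1 (p : ℕ) * χ ((p : ℕ) : ZMod M) * ((p : ℕ) : ℂ) ^ (-s)
               + A (p : ℕ) 1 * χ ((p : ℕ) : ZMod M) ^ 2 * ((p : ℕ) : ℂ) ^ (-(2 * s))
               - χ ((p : ℕ) : ZMod M) ^ 3 * ψ ((p : ℕ) : ZMod N) * ((p : ℕ) : ℂ) ^ (-(3 * s)))⁻¹
          else 1 := by
  obtain ⟨C, -, K, hK⟩ := hbd
  refine ⟨C + 1, fun s hs => ?_⟩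
  have hsum : LSeriesSummable (twistedCoeff N A χ) s := lSeriesSummable_twistedCoeff
    (fun n hn => by simpa using hK 1 n one_pos (Nat.pos_of_ne_zero hn)) hs
  have hmul {m n : ℕ} (hmn : m.Coprime n) : LSeries.term (twistedCoeff N A χ) s (m * n) =
      LSeries.term (twistedCoeff N A χ) s m * LSeries.term (twistedCoeff N A χ) s n :=
    LSeries.term_mul_of_map_mul s fun hm hn => HeckeRelation2.twistedCoeff_mul hH2 hm hn hmn
  have hprod := EulerProduct.eulerProduct_hasProd (by simp [LSeries.term, twistedCoeff, hA11])
    hmul (summable_norm_iff.mpr hsum) (LSeries.term_zero _ _)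
  simp_rw [tsum_term_twistedCoeff_prime_pow hA11 hH1 hH2 hsum, hsum.tsum_eq_zero_add,
    LSeries.term_zero, zero_add] at hprod
  simp_rw [← term_twistedCoeff_succ]
  exact ⟨(summable_nat_add_iff 1).mpr hsum, hprod.multipliable, hprod.tprod_eq.symm⟩

/-- Euler product: under the two Hecke relations and `A(1,1)=1`,
`∑_{n ≥ 1, (n,N)=1} A(1,n) χ(n) n^{-s}
  = ∏_{p ∤ N} (1 - A(1,p)χ(p)p^{-s} + A(p,1)χ(p)²p^{-2s} - χ(p)³ψ(p)p^{-3s})⁻¹`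
for `Re(s)` sufficiently large. -/
theorem statement_8 (N M : ℕ) (hN : 0 < N) (ψ : DirichletCharacter ℂ N)
    (A : ℕ → ℕ → ℂ) (hA11 : A 1 1 = 1)
    (hbd : ∃ C : ℝ, 0 < C ∧ ∃ K : ℝ, ∀ m n : ℕ, 0 < m → 0 < n →
      ‖A m n‖ ≤ K * ((m * n : ℕ) : ℝ) ^ C)
    (hH1 : ∀ n n₁ n₂ : ℕ, 0 < n → 0 < n₁ → 0 < n₂ → Nat.Coprime n N →
      A n 1 * A n₂ n₁ = heckeRHS1 ψ A n n₁ n₂)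
    (hH2 : ∀ n n₁ n₂ : ℕ, 0 < n → 0 < n₁ → 0 < n₂ → Nat.Coprime n N →
      A 1 n * A n₂ n₁ = heckeRHS2 ψ A n n₁ n₂)
    (χ : DirichletCharacter ℂ M) :
    ∃ T : ℝ, ∀ s : ℂ, T < s.re →
      Summable (fun n : ℕ => if Nat.Coprime (n + 1) N then
        A 1 (n + 1) * χ ((n + 1 : ℕ) : ZMod M) * ((n + 1 : ℕ) : ℂ) ^ (-s) else 0) ∧
      Multipliable (fun p : Nat.Primes => if ¬ ((p : ℕ) ∣ N) then
        (1 - A 1 (p : ℕ) * χ ((p : ℕ) : ZMod M) * ((p : ℕ) : ℂ) ^ (-s)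
           + A (p : ℕ) 1 * χ ((p : ℕ) : ZMod M) ^ 2 * ((p : ℕ) : ℂ) ^ (-(2 * s))
           - χ ((p : ℕ) : ZMod M) ^ 3 * ψ ((p : ℕ) : ZMod N) * ((p : ℕ) : ℂ) ^ (-(3 * s)))⁻¹
        else 1) ∧
      (∑' n : ℕ, if Nat.Coprime (n + 1) N then
          A 1 (n + 1) * χ ((n + 1 : ℕ) : ZMod M) * ((n + 1 : ℕ) : ℂ) ^ (-s) else 0)
        = ∏' p : Nat.Primes, if ¬ ((p : ℕ) ∣ N) then
            (1 - A 1 (p : ℕ) * χ ((p : ℕ) : ZMod M) * ((p : ℕ) : ℂ) ^ (-s)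
               + A (p : ℕ) 1 * χ ((p : ℕ) : ZMod M) ^ 2 * ((p : ℕ) : ℂ) ^ (-(2 * s))
               - χ ((p : ℕ) : ZMod M) ^ 3 * ψ ((p : ℕ) : ZMod N) * ((p : ℕ) : ℂ) ^ (-(3 * s)))⁻¹
          else 1 :=
  statement_8_general N M ψ A hA11 hbd hH1 hH2 χ

end
end

section
/- Let a, b, c, d be real numbers with ad − bc = 1 and c ≠ 0, let x₁, x₂, x₃ be real and y₁, y₂ > 0, and set z₁ = x₁ + iy₁, σz₁ = (az₁+b)/(cz₁+d), so that Re(σz₁) and Im(σz₁) = y₁/|cz₁+d|² are real with Im(σz₁) > 0. Then there exist a real orthogonal 3×3 matrix k and a nonzero real scalar λ such that [[1,0,0],[0,a,b],[0,c,d]] · [[1, x₂, x₃ + dx₂/c + x₁x₂],[0,1,x₁],[0,0,1]] · diag(y₁y₂, y₁, 1) = λ · [[1, −cx₃, ax₃ + x₂/c − cx₃·Re(σz₁)],[0,1,Re(σz₁)],[0,0,1]] · diag(y₂|cz₁+d|·Im(σz₁), Im(σz₁), 1) · k; that is, the two matrices are equal modulo O(3,ℝ)·ℝ^× (Iwasawa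 decomposition identity on the generalized upper half plane of GL(3,ℝ)). -/
/-!
Put `w = c z₁ + d = u + i v` and `σ z₁ = s + i t`. The lower `2 × 2` block is the Iwasawa
decomposition of `SL(2,ℝ)`: the real and imaginary parts of `σ z₁ · w = a z₁ + b` say exactly
that `[[t, s], [0, 1]]` times the rotation `[[u, -v], [v, u]]` is `[[a, b], [c, d]]` applied
to `[[y₁, x₁], [0, 1]]`, and they also give `t |w|² = (ad - bc) y₁`. With these, the first
row of the identity reduces to `ad - bc = 1`. Dividing the rotation by `|w|` makes it
orthogonal, which produces the scalar `λ = |w|`.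
-/

open Complex

noncomputable section

/-- The point `z₁ = x₁ + i y₁` of the complex upper half plane. -/
def zc (x₁ y₁ : ℝ) : ℂ := (x₁ : ℂ) + (y₁ : ℂ) * Complex.I

/-- The linear fractional transformation `σ z₁ = (a z₁ + b) / (c z₁ + d)`. -/
def sigmaZ (a b c d x₁ y₁ : ℝ) : ℂ :=
  ((a : ℂ) * zc x₁ y₁ + (b : ℂ)) / ((c : ℂ) * zc x₁ y₁ + (d : ℂ))

def lowerRotation (p q : ℝ) : Matrix (Fin 3) (Fin 3) ℝ := !![1, 0, 0; 0, p, -q; 0, q, p]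

theorem lowerRotation_mem_orthogonalGroup {p q : ℝ} (h : p ^ 2 + q ^ 2 = 1) :
    lowerRotation p q ∈ Matrix.orthogonalGroup (Fin 3) ℝ := by
  rw [Matrix.mem_orthogonalGroup_iff]
  ext i j
  fin_cases i <;> fin_cases j <;>
    simp [lowerRotation, Matrix.mul_apply, Fin.sum_univ_three, mul_comm] <;>
    linear_combination h

theorem re_mul_zc_add (c d x₁ y₁ : ℝ) : ((c : ℂ) * zc x₁ y₁ + d).re = c * x₁ + d := by
  simp [zc]

theorem im_mul_zc_add (c d x₁ y₁ : ℝ) : ((c : ℂ) * zc x₁ y₁ + d).im = c * y₁ := by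
  simp [zc]

theorem mul_zc_add_ne_zero {c y₁ : ℝ} (d x₁ : ℝ) (hc : c ≠ 0) (hy₁ : y₁ ≠ 0) :
    (c : ℂ) * zc x₁ y₁ + d ≠ 0 := fun h ↦ by
  have := congrArg Complex.im h
  rw [im_mul_zc_add, Complex.zero_im] at this
  exact mul_ne_zero hc hy₁ this

theorem sq_norm_mul_zc_add (c d x₁ y₁ : ℝ) :
    ‖(c : ℂ) * zc x₁ y₁ + d‖ ^ 2 = (c * x₁ + d) ^ 2 + (c * y₁) ^ 2 := by
  rw [Complex.sq_norm, Complex.normSq_apply, re_mul_zc_add, im_mul_zc_add]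
  ring

theorem sigmaZ_re_im_relations {a b c d x₁ y₁ : ℝ} (hw : (c : ℂ) * zc x₁ y₁ + d ≠ 0) :
    (sigmaZ a b c d x₁ y₁).re * (c * x₁ + d) - (sigmaZ a b c d x₁ y₁).im * (c * y₁)
        = a * x₁ + b ∧
      (sigmaZ a b c d x₁ y₁).re * (c * y₁) + (sigmaZ a b c d x₁ y₁).im * (c * x₁ + d)
        = a * y₁ := by
  have h : sigmaZ a b c d x₁ y₁ * ((c : ℂ) * zc x₁ y₁ + d) = a * zc x₁ y₁ + b :=
    div_mul_cancel₀ _ hw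
  constructor
  · simpa [re_mul_zc_add, im_mul_zc_add, zc] using congrArg Complex.re h
  · simpa [re_mul_zc_add, im_mul_zc_add, zc] using congrArg Complex.im h

theorem iwasawa_of_re_im_relations {a b c d x₁ x₂ x₃ y₁ y₂ s t r : ℝ}
    (hdet : a * d - b * c = 1) (hc : c ≠ 0) (hr : r ≠ 0)
    (hre : s * (c * x₁ + d) - t * (c * y₁) = a * x₁ + b)
    (him : s * (c * y₁) + t * (c * x₁ + d) = a * y₁) (ht : t * r ^ 2 = y₁) :
    !![1, 0, 0; 0, a, b; 0, c, d] *
        !![1, x₂, x₃ + d * x₂ / c + x₁ * x₂; 0, 1, x₁; 0, 0, 1] *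
        !![y₁ * y₂, 0, 0; 0, y₁, 0; 0, 0, 1]
      = r • (!![1, -c * x₃, a * x₃ + x₂ / c - c * x₃ * s; 0, 1, s; 0, 0, 1] *
          !![y₂ * r * t, 0, 0; 0, t, 0; 0, 0, 1] *
          lowerRotation ((c * x₁ + d) / r) (c * y₁ / r)) := by
  ext i j
  fin_cases i <;> fin_cases j <;>
    simp [lowerRotation, Matrix.mul_apply, Fin.sum_univ_three] <;> field_simp
  -- entries (1,1), (1,2), (1,3), (2,2), (2,3); the others close by `simp`
  · linear_combination -y₂ * ht
  · linear_combination c * x₃ * him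
  · linear_combination x₃ * c ^ 2 * hre - x₃ * c * hdet
  · linear_combination -him
  · linear_combination -hre

theorem statement_9_general (a b c d x₁ x₂ x₃ y₁ y₂ : ℝ) (hdet : a * d - b * c = 1) (hc : c ≠ 0)
    (hy₁ : 0 < y₁) :
    ∃ k : Matrix (Fin 3) (Fin 3) ℝ, k ∈ Matrix.orthogonalGroup (Fin 3) ℝ ∧
      ∃ lam : ℝ, lam ≠ 0 ∧
        (!![1, 0, 0; 0, a, b; 0, c, d] *
            !![1, x₂, x₃ + d * x₂ / c + x₁ * x₂; 0, 1, x₁; 0, 0, 1] *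
            !![y₁ * y₂, 0, 0; 0, y₁, 0; 0, 0, 1])
          = lam •
            (!![1, -c * x₃,
                  a * x₃ + x₂ / c - c * x₃ * (sigmaZ a b c d x₁ y₁).re;
                0, 1, (sigmaZ a b c d x₁ y₁).re;
                0, 0, 1] *
              !![y₂ * ‖(c : ℂ) * zc x₁ y₁ + (d : ℂ)‖ * (sigmaZ a b c d x₁ y₁).im,
                  0, 0;
                0, (sigmaZ a b c d x₁ y₁).im, 0;
                0, 0, 1] * k) := by
  have hw := mul_zc_add_ne_zero d x₁ hc hy₁.ne'
  obtain ⟨hre, him⟩ := sigmaZ_re_im_relations (a := a) (b := b) hw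
  set r := ‖(c : ℂ) * zc x₁ y₁ + d‖
  have hr : r ≠ 0 := norm_ne_zero_iff.mpr hw
  have hr2 : r ^ 2 = (c * x₁ + d) ^ 2 + (c * y₁) ^ 2 := sq_norm_mul_zc_add c d x₁ y₁
  -- eliminate `s` from the two relations
  have ht : (sigmaZ a b c d x₁ y₁).im * r ^ 2 = y₁ := by
    linear_combination (c * x₁ + d) * him - c * y₁ * hre + y₁ * hdet +
      (sigmaZ a b c d x₁ y₁).im * hr2
  refine ⟨lowerRotation ((c * x₁ + d) / r) (c * y₁ / r), lowerRotation_mem_orthogonalGroup ?_,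
    r, hr, iwasawa_of_re_im_relations hdet hc hr hre him ht⟩
  field_simp
  linear_combination -hr2

/-- Iwasawa decomposition identity on the generalized upper half plane of
`GL(3,ℝ)`: with `z₁ = x₁ + i y₁` and `σ z₁ = (a z₁ + b)/(c z₁ + d)`, there exist an
orthogonal matrix `k` and a nonzero scalar `λ` with
`[[1,0,0],[0,a,b],[0,c,d]] · [[1,x₂,x₃+dx₂/c+x₁x₂],[0,1,x₁],[0,0,1]] · diag(y₁y₂,y₁,1)
  = λ • ([[1,−cx₃,ax₃+x₂/c−cx₃·Re(σz₁)],[0,1,Re(σz₁)],[0,0,1]]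
      · diag(y₂|cz₁+d|·Im(σz₁), Im(σz₁), 1) · k)`. -/
theorem statement_9 (a b c d x₁ x₂ x₃ y₁ y₂ : ℝ) (hdet : a * d - b * c = 1) (hc : c ≠ 0)
    (hy₁ : 0 < y₁) (hy₂ : 0 < y₂) :
    ∃ k : Matrix (Fin 3) (Fin 3) ℝ, k ∈ Matrix.orthogonalGroup (Fin 3) ℝ ∧
      ∃ lam : ℝ, lam ≠ 0 ∧
        (!![1, 0, 0; 0, a, b; 0, c, d] *
            !![1, x₂, x₃ + d * x₂ / c + x₁ * x₂; 0, 1, x₁; 0, 0, 1] *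
            !![y₁ * y₂, 0, 0; 0, y₁, 0; 0, 0, 1])
          = lam •
            (!![1, -c * x₃,
                  a * x₃ + x₂ / c - c * x₃ * (sigmaZ a b c d x₁ y₁).re;
                0, 1, (sigmaZ a b c d x₁ y₁).re;
                0, 0, 1] *
              !![y₂ * ‖(c : ℂ) * zc x₁ y₁ + (d : ℂ)‖ * (sigmaZ a b c d x₁ y₁).im,
                  0, 0;
                0, (sigmaZ a b c d x₁ y₁).im, 0;
                0, 0, 1] * k) :=
  statement_9_general a b c d x₁ x₂ x₃ y₁ y₂ hdet hc hy₁

end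
end

section
/- Let χ be a primitive Dirichlet character modulo c and m₂ an integer. (i) For every positive divisor m₁ of c with m₁ > 1, ∑_{a mod c, (a,c)=1} conj(χ)(a)·S(a, m₂; c/m₁) = 0. (ii) For m₁ = 1, ∑_{a mod c, (a,c)=1} conj(χ)(a)·S(a, m₂; c) = τ(conj(χ))·g(conj(χ), c, m₂); consequently this sum equals τ(conj(χ))²·χ(m₂) if (m₂, c) = 1 and equals 0 if (m₂, c) > 1. -/
open Complex
open scoped Classical

noncomputable section

/-!
A Kloosterman sum `S(a, m₂; q)` with `q ∣ c` is a sum over `d mod q` of `e(m₂ d̄ / q)` times the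
additive character `a ↦ e(a d (c/q) / c)` modulo `c`. Summing it against `χ̄(a)` therefore
produces, for each `d`, a Gauss sum of the primitive character `χ̄` twisted by `d (c/q)`, which
equals `χ(d (c/q)) τ(χ̄)`. When `q < c` the twist `d (c/q)` shares the factor `c/q` with `c`, so
every term vanishes; when `q = c` the substitution `d ↦ d̄` turns the remaining sum into
`g(χ̄, c, m₂) = χ(m₂) τ(χ̄)`.
-/

open ZMod

lemma conjChar_eq_inv {c : ℕ} (χ : DirichletCharacter ℂ c) : conjChar χ = χ⁻¹ :=
  MulChar.star_eq_inv χ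

lemma conjChar_isPrimitive {c : ℕ} {χ : DirichletCharacter ℂ c} (hχ : χ.IsPrimitive) :
    (conjChar χ).IsPrimitive := by
  rw [conjChar_eq_inv]
  exact (DirichletCharacter.conductor_inv χ).trans hχ

lemma eZMod_eq_stdAddChar (c : ℕ) [NeZero c] (x : ZMod c) : eZMod c x = stdAddChar x := by
  rw [stdAddChar_apply, toCircle_apply, eZMod]
  push_cast
  ring_nf

lemma kloosterman_eq_sum_stdAddChar (a b : ℤ) (q : ℕ) [NeZero q] :
    kloosterman a b q = ∑ d : (ZMod q)ˣ,
      stdAddChar ((a : ZMod q) * (d : ZMod q)) *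
        stdAddChar ((b : ZMod q) * ((d⁻¹ : (ZMod q)ˣ) : ZMod q)) := by
  simp only [kloosterman, dif_neg (NeZero.ne q), eZMod_eq_stdAddChar, AddChar.map_add_eq_mul]

lemma stdAddChar_intCast_of_dvd {q c : ℕ} [NeZero q] [NeZero c] (h : q ∣ c) (j : ℤ) :
    stdAddChar (j : ZMod q) = stdAddChar ((j : ZMod c) * ((c / q : ℕ) : ZMod c)) := by
  rw [← Int.cast_natCast, ← Int.cast_mul, stdAddChar_coe, stdAddChar_coe]
  have hc : (c : ℂ) = q * ((c / q : ℕ) : ℂ) := by rw [← Nat.cast_mul, Nat.mul_div_cancel' h]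
  have hcq : ((c / q : ℕ) : ℂ) ≠ 0 := by
    exact_mod_cast (Nat.div_pos (Nat.le_of_dvd (Nat.pos_of_neZero c) h) (Nat.pos_of_neZero q)).ne'
  rw [hc]
  simp only [Int.cast_mul, Int.cast_natCast]
  field_simp

lemma MulChar.sum_units_mul {R R' : Type*} [CommMonoidWithZero R] [CommSemiring R'] [Fintype R]
    [Fintype Rˣ] (χ : MulChar R R') (f : R → R') :
    ∑ a : Rˣ, χ a * f a = ∑ a, χ a * f a := by
  refine Fintype.sum_of_injective _ Units.val_injective _ _ (fun a ha => ?_) (fun _ => rfl)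
  rw [χ.map_nonunit (fun h => ha ⟨h.unit, h.unit_spec⟩), zero_mul]

section GaussSums

variable {c : ℕ} [NeZero c]

lemma sum_units_mul_stdAddChar_of_isPrimitive {ψ : DirichletCharacter ℂ c} (hψ : ψ.IsPrimitive)
    (n : ZMod c) :
    ∑ a : (ZMod c)ˣ, ψ a * stdAddChar (n * (a : ZMod c)) = ψ⁻¹ n * gaussSum ψ stdAddChar := by
  rw [MulChar.sum_units_mul ψ (fun x => stdAddChar (n * x)),
    ← gaussSum_mulShift_of_isPrimitive _ hψ]
  simp only [gaussSum, AddChar.mulShift_apply]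

lemma gSum_eq_sum_units (ψ : DirichletCharacter ℂ c) (m : ℤ) :
    gSum ψ c m = ∑ u : (ZMod c)ˣ, ψ u * stdAddChar ((m : ZMod c) * (u : ZMod c)) := by
  simp only [gSum, dif_neg (NeZero.ne c), eZMod_eq_stdAddChar, natCast_zmod_val, mul_comm]

lemma tau_eq_gaussSum_s10 (ψ : DirichletCharacter ℂ c) : tau ψ = gaussSum ψ stdAddChar := by
  rw [tau, gSum_eq_sum_units, gaussSum, ← MulChar.sum_units_mul]
  simp only [Int.cast_one, one_mul]

lemma gSum_eq_inv_mul_tau {ψ : DirichletCharacter ℂ c} (hψ : ψ.IsPrimitive) (m : ℤ) :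
    gSum ψ c m = ψ⁻¹ m * tau ψ := by
  rw [gSum_eq_sum_units, tau_eq_gaussSum_s10, sum_units_mul_stdAddChar_of_isPrimitive hψ]

end GaussSums

lemma not_isUnit_mul_natCast_of_dvd {c k : ℕ} (hk : k ∣ c) (hk1 : k ≠ 1) (x : ZMod c) :
    ¬IsUnit (x * (k : ZMod c)) := fun h =>
  hk1 (Nat.Coprime.eq_one_of_dvd ((isUnit_iff_coprime k c).mp (isUnit_of_mul_isUnit_right h)) hk)

lemma isUnit_intCast_iff_gcd_eq_one (c : ℕ) (m : ℤ) : IsUnit (m : ZMod c) ↔ Int.gcd m c = 1 := by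
  have h_natAbs : IsUnit (m : ZMod c) ↔ IsUnit (m.natAbs : ZMod c) := by
    rcases Int.natAbs_eq m with h | h
    · nth_rw 1 [h]; simp
    · nth_rw 1 [h]; simp
  rw [h_natAbs, isUnit_iff_coprime]
  rfl

section TwistedKloosterman

variable {c : ℕ} [NeZero c] {ψ : DirichletCharacter ℂ c}

lemma sum_mul_kloosterman_of_dvd (hψ : ψ.IsPrimitive) (m : ℤ) {q : ℕ} [NeZero q] (hq : q ∣ c) :
    ∑ a : (ZMod c)ˣ, ψ a * kloosterman (a : ZMod c).val m q
      = gaussSum ψ stdAddChar * ∑ d : (ZMod q)ˣ,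
          ψ⁻¹ (((d : ZMod q).val : ZMod c) * ((c / q : ℕ) : ZMod c)) *
            stdAddChar ((m : ZMod q) * ((d⁻¹ : (ZMod q)ˣ) : ZMod q)) := by
  simp only [kloosterman_eq_sum_stdAddChar, Finset.mul_sum]
  rw [Finset.sum_comm]
  refine Finset.sum_congr rfl fun d _ => ?_
  have h_lift : ∀ a : (ZMod c)ˣ,
      stdAddChar ((((a : ZMod c).val : ℤ) : ZMod q) * (d : ZMod q))
        = stdAddChar ((((d : ZMod q).val : ZMod c) * ((c / q : ℕ) : ZMod c)) * (a : ZMod c)) := by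
    intro a
    have h_int : (((a : ZMod c).val : ℤ) : ZMod q) * (d : ZMod q) =
        ((((a : ZMod c).val * (d : ZMod q).val : ℕ) : ℤ) : ZMod q) := by
      push_cast [natCast_zmod_val]
      rfl
    rw [h_int, stdAddChar_intCast_of_dvd hq]
    push_cast [natCast_zmod_val]
    congr 1
    ring
  simp only [h_lift, ← mul_assoc, ← Finset.sum_mul, sum_units_mul_stdAddChar_of_isPrimitive hψ]
  ring

lemma sum_mul_kloosterman_div_eq_zero (hψ : ψ.IsPrimitive) (m : ℤ) {m₁ : ℕ} (hm₁ : m₁ ∣ c)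
    (h1 : 1 < m₁) :
    ∑ a : (ZMod c)ˣ, ψ a * kloosterman (a : ZMod c).val m (c / m₁) = 0 := by
  have : NeZero (c / m₁) :=
    ⟨(Nat.div_pos (Nat.le_of_dvd (Nat.pos_of_neZero c) hm₁) (by omega)).ne'⟩
  rw [sum_mul_kloosterman_of_dvd hψ m (Nat.div_dvd_of_dvd hm₁),
    Nat.div_div_self hm₁ (NeZero.ne c)]
  refine mul_eq_zero_of_right _ (Finset.sum_eq_zero fun d _ => ?_)
  rw [MulChar.map_nonunit _ (not_isUnit_mul_natCast_of_dvd hm₁ h1.ne' _), zero_mul]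

lemma sum_mul_kloosterman_self (hψ : ψ.IsPrimitive) (m : ℤ) :
    ∑ a : (ZMod c)ˣ, ψ a * kloosterman (a : ZMod c).val m c = tau ψ * gSum ψ c m := by
  rw [sum_mul_kloosterman_of_dvd hψ m dvd_rfl, Nat.div_self (Nat.pos_of_neZero c),
    tau_eq_gaussSum_s10, gSum_eq_sum_units]
  congr 1
  refine Fintype.sum_equiv (Equiv.inv _) _ _ fun d => ?_
  rw [Nat.cast_one, mul_one, natCast_zmod_val, MulChar.inv_apply, Ring.inverse_unit]
  rfl

end TwistedKloosterman

/-- for a primitive Dirichlet character `χ` mod `c` and any integer `m₂`: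
(i) for any divisor `m₁ > 1` of `c`, `∑_{a mod c, (a,c)=1} conj(χ)(a) S(a, m₂; c/m₁) = 0`;
(ii) for `m₁ = 1`, the sum equals `τ(conj χ) g(conj χ, c, m₂)`, hence `τ(conj χ)² χ(m₂)`
if `(m₂,c) = 1` and `0` if `(m₂,c) > 1`. -/
theorem statement_10 (c : ℕ) [NeZero c] (χ : DirichletCharacter ℂ c) (hprim : χ.IsPrimitive)
    (m₂ : ℤ) :
    (∀ m₁ ∈ c.divisors, 1 < m₁ →
      ∑ a : (ZMod c)ˣ,
        conjChar χ ((a : ZMod c)) * kloosterman (((a : ZMod c).val : ℤ)) m₂ (c / m₁) = 0) ∧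
    (∑ a : (ZMod c)ˣ,
        conjChar χ ((a : ZMod c)) * kloosterman (((a : ZMod c).val : ℤ)) m₂ c
      = tau (conjChar χ) * gSum (conjChar χ) c m₂) ∧
    (Int.gcd m₂ (c : ℤ) = 1 →
      ∑ a : (ZMod c)ˣ,
        conjChar χ ((a : ZMod c)) * kloosterman (((a : ZMod c).val : ℤ)) m₂ c
        = tau (conjChar χ) ^ 2 * χ ((m₂ : ZMod c))) ∧
    (1 < Int.gcd m₂ (c : ℤ) →
      ∑ a : (ZMod c)ˣ,
        conjChar χ ((a : ZMod c)) * kloosterman (((a : ZMod c).val : ℤ)) m₂ c = 0) := by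
  have hψχ : (conjChar χ)⁻¹ = χ := by rw [conjChar_eq_inv, inv_inv]
  have hψ := conjChar_isPrimitive hprim
  have h_self := sum_mul_kloosterman_self hψ m₂
  refine ⟨fun m₁ hm₁ h1 => sum_mul_kloosterman_div_eq_zero hψ m₂ (Nat.dvd_of_mem_divisors hm₁) h1,
    h_self, fun h_gcd => ?_, fun h_gcd => ?_⟩
  · rw [h_self, gSum_eq_inv_mul_tau hψ, hψχ]
    ring
  · have h_nonunit : ¬IsUnit (m₂ : ZMod c) := by
      rw [isUnit_intCast_iff_gcd_eq_one]
      omega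
    rw [h_self, gSum_eq_inv_mul_tau hψ, hψχ, χ.map_nonunit h_nonunit, zero_mul, mul_zero]

end
end
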